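/- arXiv:math/0605232 — 6 statements merged into one kernel-verified Lean document; each statement's English description precedes it below -/
import Mathlib

section
/- Let K be a field of characteristic 2 and let f ∈ K[X] be a polynomial in one variable. In the polynomial ring K[X₀, X₁, X₂], the polynomial D = (X₀+X₁)(X₁+X₂)(X₀+X₂) divides the polynomial N_f = f(X₀) + f(X₁) + f(X₂) + f(X₀+X₁+X₂) (where f(P) denotes substitution of the polynomial P into f). -/
/-!
In characteristic 2 the four points `a, b, c, a + b + c` form the coset `a + V` of the additive
subgroup `V = {0, u, w, u + w}`, where `u = a + b` and `w = a + c`. Translate by `a` and reduce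
modulo the monic quartic `L = ∏_{v ∈ V} (X - v)`, which vanishes on `V`: only the cubic remainder `r`
contributes to the sum over `V`. The power sums over `V` vanish in degrees `0, 1, 2`, and in degree
`3` they equal `u * w * (u + w) = (a + b) * (b + c) * (a + c)`, so the sum is `r₃` times this product.
-/

namespace Polynomial

variable {R : Type*} [CommRing R] [CharP R 2]

theorem sum_eval_span_pair_of_natDegree_lt_four {r : R[X]} (hr : r.natDegree < 4) (u w : R) :
    r.eval 0 + r.eval u + r.eval w + r.eval (u + w) = r.coeff 3 * (u * w * (u + w)) := by
  simp only [eval_eq_sum_range' hr, Finset.sum_range_succ, Finset.sum_range_zero]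
  linear_combination (2 * r.coeff 0 + r.coeff 1 * (u + w) + r.coeff 2 * (u ^ 2 + w ^ 2 + u * w)
    + r.coeff 3 * (u ^ 3 + w ^ 3 + u ^ 2 * w + u * w ^ 2)) * CharTwo.two_eq_zero (R := R)

theorem mul_mul_dvd_sum_eval_span_pair (g : R[X]) (u w : R) :
    u * w * (u + w) ∣ g.eval 0 + g.eval u + g.eval w + g.eval (u + w) := by
  have := CharP.nontrivial_of_char_ne_one (R := R) (v := 2) (by norm_num)
  have hL_monic : (X * (X - C u) * (X - C w) * (X - C (u + w))).Monic := by monicity!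
  have hL_deg : (X * (X - C u) * (X - C w) * (X - C (u + w))).natDegree = 4 := by
    compute_degree!
  set L := X * (X - C u) * (X - C w) * (X - C (u + w)) with hL
  have hr : (g %ₘ L).natDegree < 4 :=
    hL_deg ▸ natDegree_modByMonic_lt g hL_monic fun h ↦ by simp [h] at hL_deg
  obtain ⟨h0, hu, hw, huw⟩ :
      L.eval 0 = 0 ∧ L.eval u = 0 ∧ L.eval w = 0 ∧ L.eval (u + w) = 0 := by
    simp [hL]
  rw [← modByMonic_add_div g L]
  simp only [eval_add, eval_mul, h0, hu, hw, huw, zero_mul, add_zero]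
  rw [sum_eval_span_pair_of_natDegree_lt_four hr]
  exact dvd_mul_left _ _

theorem mul_mul_dvd_sum_eval_add_add (f : R[X]) (a b c : R) :
    (a + b) * (b + c) * (a + c) ∣ f.eval a + f.eval b + f.eval c + f.eval (a + b + c) := by
  have h := mul_mul_dvd_sum_eval_span_pair (f.comp (X + C a)) (a + b) (a + c)
  simp only [eval_comp, eval_add, eval_X, eval_C] at h
  have h2 : (2 : R) = 0 := CharTwo.two_eq_zero
  have hs : a + b + (a + c) + a = a + b + c := by linear_combination a * h2
  have hb : a + b + a = b := by linear_combination a * h2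
  have hc : a + c + a = c := by linear_combination a * h2
  have hD : (a + b) * (a + c) * (a + b + (a + c)) = (a + b) * (b + c) * (a + c) := by
    linear_combination (a + b) * (a + c) * a * h2
  rwa [zero_add, hs, hb, hc, hD] at h

end Polynomial

open MvPolynomial

theorem stmt_3 (K : Type*) [Field K] [CharP K 2] (f : Polynomial K) :
    ((X 0 + X 1) * (X 1 + X 2) * (X 0 + X 2) : MvPolynomial (Fin 3) K) ∣
      (Polynomial.aeval (X 0 : MvPolynomial (Fin 3) K) f + Polynomial.aeval (X 1) f +
        Polynomial.aeval (X 2) f + Polynomial.aeval (X 0 + X 1 + X 2) f) := by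
  simp only [Polynomial.aeval_def, ← Polynomial.eval_map]
  exact Polynomial.mul_mul_dvd_sum_eval_add_add _ _ _ _
end

section
/- Let f ∈ F[X] be a polynomial of degree d ≥ 5 whose induced function F → F is APN, and suppose the polynomial φ_f is absolutely irreducible. Then the number of triples (x₀, x₁, x₂) ∈ F³ with φ_f(x₀, x₁, x₂) = 0 is at most 3((d − 3)q + 1). -/
open MvPolynomial

/-- A function `f : F → F` is almost perfectly nonlinear (APN) if for every `a ≠ 0`
and every `b`, the equation `f (x + a) + f x = b` has at most 2 solutions. -/
def IsAPN {F : Type*} [Field F] (f : F → F) : Prop :=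
  ∀ a : F, a ≠ 0 → ∀ b : F, Nat.card {x : F // f (x + a) + f x = b} ≤ 2

/-- The polynomial `D = (X₀+X₁)(X₁+X₂)(X₀+X₂)`. -/
noncomputable def Dpoly (F : Type*) [Field F] : MvPolynomial (Fin 3) F :=
  (X 0 + X 1) * (X 1 + X 2) * (X 0 + X 2)

/-- The polynomial `N_f = f(X₀) + f(X₁) + f(X₂) + f(X₀+X₁+X₂)`. -/
noncomputable def Npoly {F : Type*} [Field F] (f : Polynomial F) : MvPolynomial (Fin 3) F :=
  Polynomial.aeval (X 0) f + Polynomial.aeval (X 1) f + Polynomial.aeval (X 2) f +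
    Polynomial.aeval (X 0 + X 1 + X 2) f

/-! ### Auxiliary lemmas -/

lemma Finsupp.degree_eq_sum' {σ : Type*} (s : σ →₀ ℕ) : s.degree = s.sum fun _ e => e := rfl

lemma deg_le_tot {R σ : Type*} [CommSemiring R] {p : MvPolynomial σ R} {d : σ →₀ ℕ}
    (h : coeff d p ≠ 0) : d.degree ≤ p.totalDegree := by
  rw [Finsupp.degree_eq_sum']
  exact le_totalDegree (mem_support_iff.mpr h)

lemma Finsupp.degree_add'' {σ : Type*} (u v : σ →₀ ℕ) :
    (u + v).degree = u.degree + v.degree := by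
  rw [Finsupp.degree_eq_weight_one]
  exact map_add _ u v

lemma totalDegree_mul_ge {R σ : Type*} [CommRing R] [IsDomain R]
    {p q : MvPolynomial σ R} (hp : p ≠ 0) (hq : q ≠ 0) :
    p.totalDegree + q.totalDegree ≤ (p * q).totalDegree := by
  classical
  set a := p.totalDegree with ha
  set b := q.totalDegree with hb
  set pa := homogeneousComponent a p with hpa
  set qb := homogeneousComponent b q with hqb
  have hpane : pa ≠ 0 := by
    obtain ⟨s, hs, hdeg⟩ := Finset.exists_mem_eq_sup p.support (support_nonempty.mpr hp)
      (fun s => s.sum fun _ e => e)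
    intro h0
    have : coeff s pa = coeff s p := by
      rw [hpa, coeff_homogeneousComponent, if_pos]
      rw [Finsupp.degree_eq_sum', ← hdeg]; rfl
    rw [h0, coeff_zero] at this
    exact mem_support_iff.mp hs this.symm
  have hqbne : qb ≠ 0 := by
    obtain ⟨s, hs, hdeg⟩ := Finset.exists_mem_eq_sup q.support (support_nonempty.mpr hq)
      (fun s => s.sum fun _ e => e)
    intro h0
    have : coeff s qb = coeff s q := by
      rw [hqb, coeff_homogeneousComponent, if_pos]
      rw [Finsupp.degree_eq_sum', ← hdeg]; rfl
    rw [h0, coeff_zero] at this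
    exact mem_support_iff.mp hs this.symm
  have hhom : (pa * qb).IsHomogeneous (a + b) :=
    (homogeneousComponent_isHomogeneous a p).mul (homogeneousComponent_isHomogeneous b q)
  obtain ⟨m, hm⟩ : ∃ m, coeff m (pa * qb) ≠ 0 := by
    by_contra h
    push_neg at h
    exact mul_ne_zero hpane hqbne (ext _ _ fun m => by simpa using h m)
  have hmdeg : m.degree = a + b := by
    rw [Finsupp.degree_eq_weight_one]; exact hhom hm
  have key : coeff m (p * q) = coeff m (pa * qb) := by
    have hsplit : p * q = pa * qb + (pa * (q - qb) + (p - pa) * q) := by ring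
    rw [hsplit, coeff_add, coeff_add]
    have h1 : coeff m (pa * (q - qb)) = 0 := by
      rw [coeff_mul]
      apply Finset.sum_eq_zero
      intro x hx
      rcases eq_or_ne (coeff x.1 pa) 0 with h | h
      · rw [h, zero_mul]
      · have hx1 : x.1.degree = a := by
          rw [Finsupp.degree_eq_weight_one]; exact (homogeneousComponent_isHomogeneous a p) h
        have hadd : x.1 + x.2 = m := Finset.HasAntidiagonal.mem_antidiagonal.mp hx
        have hx2 : x.2.degree = b := by
          have := congrArg Finsupp.degree hadd
          rw [Finsupp.degree_add''] at this
          omega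
        have : coeff x.2 (q - qb) = 0 := by
          rw [coeff_sub, hqb, coeff_homogeneousComponent, if_pos hx2, sub_self]
        rw [this, mul_zero]
    have h2 : coeff m ((p - pa) * q) = 0 := by
      rw [coeff_mul]
      apply Finset.sum_eq_zero
      intro x hx
      rcases eq_or_ne (coeff x.1 (p - pa)) 0 with h | h
      · rw [h, zero_mul]
      · have hx1le : x.1.degree ≤ a := by
          apply deg_le_tot (p := p)
          intro hc
          apply h
          rw [coeff_sub, hc, hpa, coeff_homogeneousComponent]
          split <;> simp [hc]
        have hx1ne : x.1.degree ≠ a := by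
          intro hc
          apply h
          rw [coeff_sub, hpa, coeff_homogeneousComponent, if_pos hc, sub_self]
        have hadd : x.1 + x.2 = m := Finset.HasAntidiagonal.mem_antidiagonal.mp hx
        have hx2 : b < x.2.degree := by
          have := congrArg Finsupp.degree hadd
          rw [Finsupp.degree_add''] at this
          omega
        have : coeff x.2 q = 0 := by
          by_contra hc
          exact absurd (deg_le_tot hc) (by omega)
        rw [this, mul_zero]
    rw [h1, h2, add_zero, add_zero]
  calc a + b = m.degree := hmdeg.symm
    _ ≤ (p * q).totalDegree := deg_le_tot (key ▸ hm)

/-! ### Counting zeros of bivariate polynomials -/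

open Polynomial in
lemma count_biv {F : Type*} [Field F] [Fintype F] [DecidableEq F]
    (g : Polynomial (Polynomial F)) (hg : g ≠ 0) (n : ℕ)
    (hw : ∀ j, g.coeff j ≠ 0 → (g.coeff j).natDegree + j ≤ n) :
    (Finset.univ.filter fun p : F × F =>
        Polynomial.eval p.2 (g.map (Polynomial.evalRingHom p.1)) = 0).card
      ≤ n * Fintype.card F := by
  classical
  set t := g.natDegree with htdef
  set L := g.coeff t with hLdef
  have hL : L ≠ 0 := by
    rw [hLdef, htdef]
    simpa using mt leadingCoeff_eq_zero.mp hg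
  have hLt : L.natDegree + t ≤ n := hw t hL
  set bad : Finset F := Finset.univ.filter fun x => L.eval x = 0 with hbaddef
  have hbad : bad.card ≤ L.natDegree := by
    have hsub : bad ⊆ L.roots.toFinset := by
      intro x hx
      rw [hbaddef, Finset.mem_filter] at hx
      rw [Multiset.mem_toFinset, mem_roots hL]
      exact hx.2
    calc bad.card ≤ L.roots.toFinset.card := Finset.card_le_card hsub
      _ ≤ Multiset.card L.roots := L.roots.toFinset_card_le
      _ ≤ L.natDegree := L.card_roots'
  have hsub : (Finset.univ.filter fun p : F × F =>
        Polynomial.eval p.2 (g.map (Polynomial.evalRingHom p.1)) = 0)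
      ⊆ (bad ×ˢ Finset.univ) ∪
        Finset.univ.biUnion (fun x : F => {x} ×ˢ (g.map (evalRingHom x)).roots.toFinset) := by
    intro p hp
    rw [Finset.mem_filter] at hp
    rcases eq_or_ne (L.eval p.1) 0 with h | h
    · apply Finset.mem_union_left
      rw [Finset.mem_product, hbaddef, Finset.mem_filter]
      exact ⟨⟨Finset.mem_univ _, h⟩, Finset.mem_univ _⟩
    · apply Finset.mem_union_right
      rw [Finset.mem_biUnion]
      refine ⟨p.1, Finset.mem_univ _, ?_⟩
      have hne : g.map (evalRingHom p.1) ≠ 0 := by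
        intro h0
        apply h
        have := congrArg (fun r => r.coeff t) h0
        simpa [Polynomial.coeff_map] using this
      rw [Finset.mem_product, Multiset.mem_toFinset, mem_roots hne]
      exact ⟨Finset.mem_singleton_self _, hp.2⟩
  calc (Finset.univ.filter fun p : F × F =>
        Polynomial.eval p.2 (g.map (Polynomial.evalRingHom p.1)) = 0).card
      ≤ _ := Finset.card_le_card hsub
    _ ≤ (bad ×ˢ Finset.univ).card +
        (Finset.univ.biUnion (fun x : F => {x} ×ˢ (g.map (evalRingHom x)).roots.toFinset)).card :=
        Finset.card_union_le _ _
    _ ≤ L.natDegree * Fintype.card F + t * Fintype.card F := by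
        gcongr
        · rw [Finset.card_product, Finset.card_univ]
          exact Nat.mul_le_mul_right _ hbad
        · calc (Finset.univ.biUnion
                (fun x : F => {x} ×ˢ (g.map (evalRingHom x)).roots.toFinset)).card
              ≤ ∑ x : F, ({x} ×ˢ (g.map (evalRingHom x)).roots.toFinset).card :=
              Finset.card_biUnion_le
            _ ≤ ∑ _x : F, t := by
                apply Finset.sum_le_sum
                intro x _
                rw [Finset.card_product, Finset.card_singleton, one_mul]
                calc (g.map (evalRingHom x)).roots.toFinset.card
                    ≤ Multiset.card (g.map (evalRingHom x)).roots :=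
                      Multiset.toFinset_card_le _
                  _ ≤ (g.map (evalRingHom x)).natDegree := card_roots' _
                  _ ≤ t := natDegree_map_le
            _ = t * Fintype.card F := by
                rw [Finset.sum_const, Finset.card_univ, smul_eq_mul, mul_comm]
    _ ≤ n * Fintype.card F := by
        rw [← add_mul]
        exact Nat.mul_le_mul_right _ hLt

/-! ### The iterated-polynomial equivalence -/

noncomputable def biv (F : Type*) [CommSemiring F] :
    MvPolynomial (Fin 2) F ≃ₐ[F] Polynomial (Polynomial F) :=
  (MvPolynomial.finSuccEquiv F 1).trans <| Polynomial.mapAlgEquiv <|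
    (MvPolynomial.finSuccEquiv F 0).trans
      (Polynomial.mapAlgEquiv (MvPolynomial.isEmptyAlgEquiv F (Fin 0)))

@[simp] lemma biv_X0 {F : Type*} [CommSemiring F] :
    biv F (X 0) = Polynomial.X := by
  simp [biv, finSuccEquiv_X_zero, Polynomial.coe_mapAlgEquiv]

@[simp] lemma biv_X1 {F : Type*} [CommSemiring F] :
    biv F (X 1) = Polynomial.C Polynomial.X := by
  have h' : (MvPolynomial.finSuccEquiv F 1) (X 1) = Polynomial.C (X 0) :=
    MvPolynomial.finSuccEquiv_X_succ (j := 0)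
  simp [biv, h', Polynomial.coe_mapAlgEquiv, finSuccEquiv_X_zero,
    Polynomial.map_C, Polynomial.map_X]

@[simp] lemma biv_C {F : Type*} [CommSemiring F] (c : F) :
    biv F (C c) = Polynomial.C (Polynomial.C c) := by
  have : (C c : MvPolynomial (Fin 2) F) = algebraMap F _ c := rfl
  rw [this, AlgEquiv.commutes]
  rfl

lemma biv_monomial {F : Type*} [CommSemiring F] (u : Fin 2 →₀ ℕ) (c : F) :
    biv F (monomial u c) =
      Polynomial.C (Polynomial.C c * Polynomial.X ^ u 1) * Polynomial.X ^ u 0 := by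
  rw [monomial_eq, Finsupp.prod_fintype _ _ (fun i => pow_zero _), Fin.prod_univ_two]
  rw [map_mul, map_mul, biv_C, map_pow, map_pow, biv_X0, biv_X1]
  rw [Polynomial.C_mul, Polynomial.C_pow]
  ring

lemma biv_wt {F : Type*} [CommSemiring F] (P : MvPolynomial (Fin 2) F) (j : ℕ)
    (h : ((biv F P).coeff j) ≠ 0) :
    ((biv F P).coeff j).natDegree + j ≤ P.totalDegree := by
  classical
  set n := P.totalDegree with hn
  have hsum : biv F P = ∑ u ∈ P.support,
      Polynomial.C (Polynomial.C (coeff u P) * Polynomial.X ^ u 1) * Polynomial.X ^ u 0 := by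
    conv_lhs => rw [P.as_sum]
    rw [map_sum]
    exact Finset.sum_congr rfl fun u _ => biv_monomial u _
  have hcoeff : (biv F P).coeff j = ∑ u ∈ P.support,
      (if u 0 = j then Polynomial.C (coeff u P) * Polynomial.X ^ u 1 else 0) := by
    rw [hsum, Polynomial.finset_sum_coeff]
    refine Finset.sum_congr rfl fun u _ => ?_
    rw [Polynomial.coeff_C_mul, Polynomial.coeff_X_pow]
    by_cases huj : u 0 = j
    · rw [if_pos huj, if_pos huj.symm, mul_one]
    · rw [if_neg huj, if_neg (fun hc => huj hc.symm), mul_zero]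
  have husum : ∀ u ∈ P.support, u 0 + u 1 ≤ n := by
    intro u hu
    have := le_totalDegree hu
    rwa [Finsupp.sum_fintype _ _ (fun i => rfl), Fin.sum_univ_two] at this
  have hj : j ≤ n := by
    by_contra hj
    push_neg at hj
    apply h
    rw [hcoeff]
    apply Finset.sum_eq_zero
    intro u hu
    rw [if_neg]
    intro hc
    exact absurd (husum u hu) (by omega)
  have hdeg : ((biv F P).coeff j).natDegree ≤ n - j := by
    rw [hcoeff]
    apply Polynomial.natDegree_sum_le_of_forall_le
    intro u hu
    split
    · next huj =>
        refine le_trans (Polynomial.natDegree_C_mul_le _ _) ?_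
        refine le_trans (Polynomial.natDegree_X_pow_le _) ?_
        have := husum u hu
        omega
    · simp
  omega

lemma biv_eval {F : Type*} [CommSemiring F] (P : MvPolynomial (Fin 2) F) (x z : F) :
    Polynomial.eval z (Polynomial.map (Polynomial.evalRingHom x) (biv F P)) =
      eval ![z, x] P := by
  have hhom : ((Polynomial.evalRingHom z).comp
      ((Polynomial.mapRingHom (Polynomial.evalRingHom x)).comp
        ((biv F : MvPolynomial (Fin 2) F ≃+* Polynomial (Polynomial F)) :
          MvPolynomial (Fin 2) F →+* Polynomial (Polynomial F)))) = eval ![z, x] := by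
    apply MvPolynomial.ringHom_ext
    · intro c
      simp
    · intro i
      fin_cases i <;> simp
  exact RingHom.congr_fun hhom P

/-! ### Divisibility and irreducibility lemmas -/

lemma dvd_sub_subst {F : Type*} [Field F] [CharP F 2] (i j : Fin 3)
    (w : Fin 3 → MvPolynomial (Fin 3) F)
    (hwj : w j = X i) (hw : ∀ t, t ≠ j → w t = X t) (φ : MvPolynomial (Fin 3) F) :
    (X i + X j : MvPolynomial (Fin 3) F) ∣ φ - aeval w φ := by
  classical
  have hXX : (X i + X j : MvPolynomial (Fin 3) F) = X j - X i := by
    rw [CharTwo.sub_eq_add, add_comm]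
  rw [hXX]
  conv_rhs => rw [φ.as_sum]
  rw [map_sum, ← Finset.sum_sub_distrib]
  apply Finset.dvd_sum
  intro s _
  set c := coeff s φ
  have hmono : (monomial s c : MvPolynomial (Fin 3) F) = C c * ∏ t : Fin 3, X t ^ s t := by
    rw [monomial_eq, Finsupp.prod_fintype _ _ (fun t => pow_zero _)]
  have haeval : aeval w (monomial s c) = C c * ∏ t : Fin 3, (w t) ^ s t := by
    rw [aeval_monomial, Finsupp.prod_fintype _ _ (fun t => pow_zero _)]
    rfl
  have hsplit : ∀ (v : Fin 3 → MvPolynomial (Fin 3) F),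
      (∏ t : Fin 3, v t ^ s t) = v j ^ s j * ∏ t ∈ Finset.univ.erase j, v t ^ s t := by
    intro v
    rw [← Finset.mul_prod_erase Finset.univ _ (Finset.mem_univ j)]
  have hprodeq : (∏ t ∈ Finset.univ.erase j, (w t) ^ s t)
      = ∏ t ∈ Finset.univ.erase j, (X t : MvPolynomial (Fin 3) F) ^ s t := by
    apply Finset.prod_congr rfl
    intro t ht
    rw [hw t (Finset.ne_of_mem_erase ht)]
  have hkey : monomial s c - aeval w (monomial s c)
      = (C c * ∏ t ∈ Finset.univ.erase j, (X t : MvPolynomial (Fin 3) F) ^ s t)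
        * (X j ^ s j - X i ^ s j) := by
    rw [haeval, hmono, hsplit, hsplit, hprodeq, hwj]
    ring
  rw [hkey]
  exact Dvd.dvd.mul_left (sub_dvd_pow_sub_pow _ _ _) _

lemma no_lin_factor {K : Type*} [Field K] (ψ : MvPolynomial (Fin 3) K) (hirr : Irreducible ψ)
    (i j k : Fin 3) (hij : i ≠ j) (hik : i ≠ k) (hjk : j ≠ k)
    (hinv : rename (Equiv.swap j k) ψ = ψ)
    (hdvd : (X i + X j : MvPolynomial (Fin 3) K) ∣ ψ) : False := by
  obtain ⟨u, hu⟩ := hdvd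
  have hXnu : ¬ IsUnit (X i + X j : MvPolynomial (Fin 3) K) := by
    intro h
    have h0 : IsUnit (0 : K) := by
      have := h.map (eval (fun _ => (0 : K)))
      simp at this
    exact not_isUnit_zero h0
  have huu : IsUnit u := (hirr.isUnit_or_isUnit hu).resolve_left hXnu
  have heq : (X i + X j : MvPolynomial (Fin 3) K) * u
      = (X i + X k) * rename (Equiv.swap j k) u := by
    have h1 : rename (Equiv.swap j k) ψ = (X i + X k) * rename (Equiv.swap j k) u := by
      rw [hu, map_mul, map_add, rename_X, rename_X,
        Equiv.swap_apply_of_ne_of_ne hij hik, Equiv.swap_apply_left]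
    rw [hinv, hu] at h1
    exact h1
  obtain ⟨v, hv⟩ := huu
  have hdvd2 : (X i + X k : MvPolynomial (Fin 3) K) ∣ (X i + X j) := by
    refine ⟨rename (Equiv.swap j k) u * ↑v⁻¹, ?_⟩
    calc (X i + X j : MvPolynomial (Fin 3) K)
        = (X i + X j) * u * ↑v⁻¹ := by
          rw [← hv, mul_assoc, Units.mul_inv, mul_one]
      _ = (X i + X k) * (rename (Equiv.swap j k) u * ↑v⁻¹) := by rw [heq, mul_assoc]
  obtain ⟨w, hw⟩ := hdvd2
  have := congrArg (eval (fun t => if t = j then (1 : K) else 0)) hw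
  simp [hij, hjk, Ne.symm hjk] at this

/-! ### Symmetry lemmas -/

lemma X_add_X_ne_zero {F : Type*} [Field F] {i j : Fin 3} (hij : i ≠ j) :
    (X i + X j : MvPolynomial (Fin 3) F) ≠ 0 := by
  intro h
  have := congrArg (eval (fun t => if t = i then (1 : F) else 0)) h
  simp [Ne.symm hij] at this

lemma Dpoly_ne_zero {F : Type*} [Field F] : Dpoly F ≠ 0 :=
  mul_ne_zero (mul_ne_zero (X_add_X_ne_zero (by decide)) (X_add_X_ne_zero (by decide)))
    (X_add_X_ne_zero (by decide))

lemma one_le_tot_X_add_X {F : Type*} [Field F] {i j : Fin 3} (hij : i ≠ j) :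
    1 ≤ (X i + X j : MvPolynomial (Fin 3) F).totalDegree := by
  have h : coeff (Finsupp.single i 1) (X i + X j : MvPolynomial (Fin 3) F) ≠ 0 := by
    rw [coeff_add]
    rw [coeff_X, coeff_X' (R := F) j (Finsupp.single i 1)]
    rw [if_neg (show ¬ (Finsupp.single j 1 = Finsupp.single i 1) from by simp [Finsupp.single_eq_single_iff, hij, Ne.symm hij])]
    simp
  have hds : (Finsupp.single i (1 : ℕ)).degree = 1 := by
    rw [Finsupp.degree_eq_sum', Finsupp.sum_single_index]
    rfl
  have := deg_le_tot h
  omega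

lemma swap12_0 : (Equiv.swap (1 : Fin 3) 2) 0 = 0 := rfl
lemma swap12_1 : (Equiv.swap (1 : Fin 3) 2) 1 = 2 := rfl
lemma swap12_2 : (Equiv.swap (1 : Fin 3) 2) 2 = 1 := rfl
lemma swap02_0 : (Equiv.swap (0 : Fin 3) 2) 0 = 2 := rfl
lemma swap02_1 : (Equiv.swap (0 : Fin 3) 2) 1 = 1 := rfl
lemma swap02_2 : (Equiv.swap (0 : Fin 3) 2) 2 = 0 := rfl

lemma rename_Dpoly_swap12 {F : Type*} [Field F] :
    rename (Equiv.swap (1 : Fin 3) 2) (Dpoly F) = Dpoly F := by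
  simp only [Dpoly, map_mul, map_add, rename_X, swap12_0, swap12_1, swap12_2]
  ring

lemma rename_Dpoly_swap02 {F : Type*} [Field F] :
    rename (Equiv.swap (0 : Fin 3) 2) (Dpoly F) = Dpoly F := by
  simp only [Dpoly, map_mul, map_add, rename_X, swap02_0, swap02_1, swap02_2]
  ring

lemma rename_aeval_X {F : Type*} [Field F] (f : Polynomial F) (σ : Equiv.Perm (Fin 3))
    (g : MvPolynomial (Fin 3) F) :
    rename σ (Polynomial.aeval g f) = Polynomial.aeval (rename σ g) f :=
  (Polynomial.aeval_algHom_apply (rename σ) g f).symm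

lemma rename_Npoly_swap12 {F : Type*} [Field F] (f : Polynomial F) :
    rename (Equiv.swap (1 : Fin 3) 2) (Npoly f) = Npoly f := by
  rw [Npoly, map_add, map_add, map_add, rename_aeval_X, rename_aeval_X, rename_aeval_X,
    rename_aeval_X]
  simp only [map_add, rename_X, swap12_0, swap12_1, swap12_2]
  have h : (X 0 + X 2 + X 1 : MvPolynomial (Fin 3) F) = X 0 + X 1 + X 2 := by ring
  rw [h]
  ring

lemma rename_Npoly_swap02 {F : Type*} [Field F] (f : Polynomial F) :
    rename (Equiv.swap (0 : Fin 3) 2) (Npoly f) = Npoly f := by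
  rw [Npoly, map_add, map_add, map_add, rename_aeval_X, rename_aeval_X, rename_aeval_X,
    rename_aeval_X]
  simp only [map_add, rename_X, swap02_0, swap02_1, swap02_2]
  have h : (X 2 + X 1 + X 0 : MvPolynomial (Fin 3) F) = X 0 + X 1 + X 2 := by ring
  rw [h]
  ring

lemma phi_invariant {F : Type*} [Field F] (f : Polynomial F) (φ : MvPolynomial (Fin 3) F)
    (hφ : Dpoly F * φ = Npoly f) (σ : Equiv.Perm (Fin 3))
    (hD : rename σ (Dpoly F) = Dpoly F) (hN : rename σ (Npoly f) = Npoly f) :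
    rename σ φ = φ := by
  apply mul_left_cancel₀ (Dpoly_ne_zero (F := F))
  calc Dpoly F * rename σ φ = rename σ (Dpoly F) * rename σ φ := by rw [hD]
    _ = rename σ (Dpoly F * φ) := (map_mul _ _ _).symm
    _ = rename σ (Npoly f) := by rw [hφ]
    _ = Npoly f := hN
    _ = Dpoly F * φ := hφ.symm

lemma eval_Npoly {F : Type*} [Field F] (f : Polynomial F) (v : Fin 3 → F) :
    eval v (Npoly f) = f.eval (v 0) + f.eval (v 1) + f.eval (v 2)
      + f.eval (v 0 + v 1 + v 2) := by
  have key : ∀ g : MvPolynomial (Fin 3) F,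
      eval v (Polynomial.aeval g f) = f.eval (eval v g) := by
    intro g
    have h := Polynomial.aeval_algHom_apply (MvPolynomial.aeval v) g f
    have e1 : MvPolynomial.aeval v ((Polynomial.aeval g) f) = eval v (Polynomial.aeval g f) := by
      rw [← MvPolynomial.coe_aeval_eq_eval]; rfl
    have e2 : (MvPolynomial.aeval v) g = eval v g := by
      rw [← MvPolynomial.coe_aeval_eq_eval]; rfl
    rw [e1, e2] at h
    rw [← h, ← Polynomial.coe_aeval_eq_eval]
  rw [Npoly, map_add, map_add, map_add, key, key, key, key]
  simp [eval_X, map_add]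

lemma tot_aeval_le {F : Type*} [Field F] (f : Polynomial F) (g : MvPolynomial (Fin 3) F)
    (hg : g.totalDegree ≤ 1) :
    (Polynomial.aeval g f).totalDegree ≤ f.natDegree := by
  rw [Polynomial.aeval_def, Polynomial.eval₂_eq_sum_range]
  apply le_trans (totalDegree_finset_sum _ _)
  apply Finset.sup_le
  intro i hi
  rw [Finset.mem_range] at hi
  calc (algebraMap F (MvPolynomial (Fin 3) F) (f.coeff i) * g ^ i).totalDegree
      ≤ (algebraMap F (MvPolynomial (Fin 3) F) (f.coeff i)).totalDegree
        + (g ^ i).totalDegree := totalDegree_mul _ _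
    _ ≤ 0 + i * g.totalDegree := by
        gcongr
        · rw [MvPolynomial.algebraMap_eq, totalDegree_C]
        · exact totalDegree_pow _ _
    _ ≤ f.natDegree := by
        rw [zero_add]
        calc i * g.totalDegree ≤ i * 1 := Nat.mul_le_mul_left _ hg
          _ = i := Nat.mul_one _
          _ ≤ f.natDegree := by omega

lemma tot_Npoly_le {F : Type*} [Field F] (f : Polynomial F) :
    (Npoly f).totalDegree ≤ f.natDegree := by
  have h1 : (X 0 + X 1 + X 2 : MvPolynomial (Fin 3) F).totalDegree ≤ 1 := by
    apply le_trans (totalDegree_add _ _)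
    simp [totalDegree_add, totalDegree_X]
    exact le_trans (totalDegree_add _ _) (by simp [totalDegree_X])
  rw [Npoly]
  apply le_trans (totalDegree_add _ _)
  apply max_le
  apply le_trans (totalDegree_add _ _)
  apply max_le
  apply le_trans (totalDegree_add _ _)
  apply max_le
  · exact tot_aeval_le f _ (by simp [totalDegree_X])
  · exact tot_aeval_le f _ (by simp [totalDegree_X])
  · exact tot_aeval_le f _ (by simp [totalDegree_X])
  · exact tot_aeval_le f _ h1

/-! ### Per-plane counting -/

lemma plane_count {F : Type*} [Field F] [Fintype F] [DecidableEq F]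
    (φ : MvPolynomial (Fin 3) F) (n : ℕ) (htot : φ.totalDegree ≤ n)
    (ν : Fin 3 → Fin 2) (hν : rename ν φ ≠ 0) :
    (Finset.univ.filter fun y : F × F =>
        MvPolynomial.eval (![y.2, y.1] ∘ ν) φ = 0).card ≤ n * Fintype.card F := by
  classical
  set g := biv F (rename ν φ) with hg
  have hgne : g ≠ 0 := by
    intro h
    apply hν
    apply (biv F).injective
    rw [map_zero, ← hg]
    exact h
  have hfeq : (Finset.univ.filter fun y : F × F =>
      MvPolynomial.eval (![y.2, y.1] ∘ ν) φ = 0)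
      = Finset.univ.filter fun y : F × F =>
        Polynomial.eval y.2 (g.map (Polynomial.evalRingHom y.1)) = 0 := by
    apply Finset.filter_congr
    intro y _
    rw [hg, biv_eval, eval_rename]
  rw [hfeq]
  apply count_biv g hgne n
  intro j hj
  calc (g.coeff j).natDegree + j ≤ (rename ν φ).totalDegree := biv_wt _ j hj
    _ ≤ φ.totalDegree := totalDegree_rename_le _ _
    _ ≤ n := htot

theorem main_aux {F : Type*} [Field F] [Fintype F] [DecidableEq F] [CharP F 2]
    {K : Type*} [Field K] (ρ : F →+* K) (f : Polynomial F) (d : ℕ)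
    (hdeg : f.natDegree = d) (hd5 : 5 ≤ d)
    (hAPN : IsAPN fun x => Polynomial.eval x f)
    (φ : MvPolynomial (Fin 3) F)
    (hφ : Dpoly F * φ = Npoly f)
    (hirr : Irreducible (MvPolynomial.map ρ φ)) :
    Nat.card {p : F × F × F //
        MvPolynomial.eval ![p.1, p.2.1, p.2.2] φ = 0} ≤ 3 * ((d - 3) * Fintype.card F + 1) := by
  classical
  have h2 : (2 : F) = 0 := CharTwo.two_eq_zero
  have hφ0 : φ ≠ 0 := fun h => hirr.ne_zero (by rw [h, map_zero])
  -- total degree bound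
  have htotφ : φ.totalDegree ≤ d - 3 := by
    have hD3 : 3 ≤ (Dpoly F).totalDegree := by
      have ha : 1 ≤ (X 0 + X 1 : MvPolynomial (Fin 3) F).totalDegree :=
        one_le_tot_X_add_X (by decide)
      have hb : 1 ≤ (X 1 + X 2 : MvPolynomial (Fin 3) F).totalDegree :=
        one_le_tot_X_add_X (by decide)
      have hc : 1 ≤ (X 0 + X 2 : MvPolynomial (Fin 3) F).totalDegree :=
        one_le_tot_X_add_X (by decide)
      have h1 := totalDegree_mul_ge (X_add_X_ne_zero (F := F) (i := 0) (j := 1) (by decide))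
        (X_add_X_ne_zero (i := 1) (j := 2) (by decide))
      have h2' := totalDegree_mul_ge
        (mul_ne_zero (X_add_X_ne_zero (F := F) (i := 0) (j := 1) (by decide))
          (X_add_X_ne_zero (i := 1) (j := 2) (by decide)))
        (X_add_X_ne_zero (i := 0) (j := 2) (by decide))
      rw [Dpoly]
      omega
    have h1 := totalDegree_mul_ge (Dpoly_ne_zero (F := F)) hφ0
    have h2' : (Dpoly F * φ).totalDegree ≤ d := by
      rw [hφ, ← hdeg]
      exact tot_Npoly_le f
    omega
  -- invariance
  have hinv12 : rename (Equiv.swap (1 : Fin 3) 2) φ = φ :=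
    phi_invariant f φ hφ _ rename_Dpoly_swap12 (rename_Npoly_swap12 f)
  have hinv02 : rename (Equiv.swap (0 : Fin 3) 2) φ = φ :=
    phi_invariant f φ hφ _ rename_Dpoly_swap02 (rename_Npoly_swap02 f)
  -- the general nonvanishing argument
  have key : ∀ (ν : Fin 3 → Fin 2) (tv : Fin 3 → Fin 3) (gm : Fin 2 → Fin 3)
      (i j k : Fin 3), i ≠ j → i ≠ k → j ≠ k →
      (gm ∘ ν = tv) →
      ((X ∘ tv : Fin 3 → MvPolynomial (Fin 3) F) j = X i) →
      (∀ t, t ≠ j → (X ∘ tv : Fin 3 → MvPolynomial (Fin 3) F) t = X t) →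
      rename (Equiv.swap j k) φ = φ →
      rename ν φ ≠ 0 := by
    intro ν tv gm i j k hij hik hjk hcomp hwj hw hinvφ h0
    have htv : rename tv φ = 0 := by
      rw [← hcomp, ← rename_rename, h0, map_zero]
    have hsub0 : aeval (X ∘ tv : Fin 3 → MvPolynomial (Fin 3) F) φ = 0 := by
      rw [← aeval_rename, aeval_X_left_apply, htv]
    have hdvdφ : (X i + X j : MvPolynomial (Fin 3) F) ∣ φ := by
      have hd := dvd_sub_subst i j (X ∘ tv) hwj hw φ
      rwa [hsub0, sub_zero] at hd
    have hdvdK : (X i + X j : MvPolynomial (Fin 3) K) ∣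
        MvPolynomial.map (ρ) φ := by
      obtain ⟨u, hu⟩ := hdvdφ
      refine ⟨MvPolynomial.map (ρ) u, ?_⟩
      rw [hu, map_mul, map_add, MvPolynomial.map_X, MvPolynomial.map_X]
    have hinvK : rename (Equiv.swap j k) (MvPolynomial.map (ρ) φ)
        = MvPolynomial.map (ρ) φ := by
      rw [← map_rename, hinvφ]
    exact no_lin_factor _ hirr i j k hij hik hjk hinvK hdvdK
  have hne01 : rename (![1, 1, 0] : Fin 3 → Fin 2) φ ≠ 0 := by
    apply key ![1, 1, 0] ![0, 0, 2] ![2, 0] 0 1 2 (by decide) (by decide) (by decide)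
    · funext t; fin_cases t <;> rfl
    · rfl
    · intro t ht; fin_cases t
      · rfl
      · exact absurd rfl ht
      · rfl
    · exact hinv12
  have hne12 : rename (![0, 1, 1] : Fin 3 → Fin 2) φ ≠ 0 := by
    apply key ![0, 1, 1] ![0, 1, 1] ![0, 1] 1 2 0 (by decide) (by decide) (by decide)
    · funext t; fin_cases t <;> rfl
    · rfl
    · intro t ht; fin_cases t
      · rfl
      · rfl
      · exact absurd rfl ht
    · rw [Equiv.swap_comm]; exact hinv02
  have hne02 : rename (![1, 0, 1] : Fin 3 → Fin 2) φ ≠ 0 := by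
    apply key ![1, 0, 1] ![0, 1, 0] ![1, 0] 0 2 1 (by decide) (by decide) (by decide)
    · funext t; fin_cases t <;> rfl
    · rfl
    · intro t ht; fin_cases t
      · rfl
      · rfl
      · exact absurd rfl ht
    · rw [Equiv.swap_comm]; exact hinv12
  -- counting setup
  set q := Fintype.card F with hqdef
  set cond : F × F × F → Prop := fun p => MvPolynomial.eval ![p.1, p.2.1, p.2.2] φ = 0
    with hcond
  have hcard : Nat.card {p : F × F × F // MvPolynomial.eval ![p.1, p.2.1, p.2.2] φ = 0}
      = (Finset.univ.filter cond).card := by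
    rw [Nat.card_eq_fintype_card]
    exact Fintype.card_subtype _
  rw [hcard]
  set T01 := Finset.univ.filter fun p : F × F × F => cond p ∧ p.1 = p.2.1 with hT01
  set T12 := Finset.univ.filter fun p : F × F × F => cond p ∧ p.2.1 = p.2.2 with hT12
  set T02 := Finset.univ.filter fun p : F × F × F => cond p ∧ p.1 = p.2.2 with hT02
  -- APN implies zeros lie on the three planes
  have hsub : Finset.univ.filter cond ⊆ T01 ∪ T12 ∪ T02 := by
    intro p hp
    rw [Finset.mem_filter] at hp
    have hc := hp.2
    by_contra hmem
    rw [Finset.mem_union, Finset.mem_union, hT01, hT12, hT02] at hmem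
    push_neg at hmem
    simp only [Finset.mem_filter, Finset.mem_univ, true_and] at hmem
    obtain ⟨⟨h01, h12⟩, h02⟩ := hmem
    have hne01' : p.1 ≠ p.2.1 := fun h => h01 ⟨hc, h⟩
    have hne12' : p.2.1 ≠ p.2.2 := fun h => h12 ⟨hc, h⟩
    have hne02' : p.1 ≠ p.2.2 := fun h => h02 ⟨hc, h⟩
    set x0 := p.1; set x1 := p.2.1; set x2 := p.2.2
    have hN0 : eval ![x0, x1, x2] (Npoly f) = 0 := by
      rw [← hφ, map_mul]
      have : eval ![x0, x1, x2] φ = 0 := hc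
      rw [this, mul_zero]
    rw [eval_Npoly] at hN0
    simp only [Matrix.cons_val_zero, Matrix.cons_val_one, Matrix.head_cons,
      Matrix.cons_val_two, Matrix.tail_cons] at hN0
    have ha : x0 + x1 ≠ 0 := by
      intro h
      apply hne01'
      show x0 = x1
      linear_combination h - x1 * h2
    set b : F := Polynomial.eval x0 f + Polynomial.eval x1 f with hb
    have hsol : ∀ x : F, (x = x1 ∨ x = x0 ∨ x = x2) →
        Polynomial.eval (x + (x0 + x1)) f + Polynomial.eval x f = b := by
      intro x hx
      rcases hx with h | h | h
      · subst h
        have harg : x1 + (x0 + x1) = x0 := by linear_combination x1 * h2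
        rw [harg, hb]
      · subst h
        have harg : x0 + (x0 + x1) = x1 := by linear_combination x0 * h2
        rw [harg, hb, add_comm]
      · subst h
        have harg : x2 + (x0 + x1) = x0 + x1 + x2 := by ring
        rw [harg, hb]
        linear_combination hN0 - (Polynomial.eval x0 f + Polynomial.eval x1 f) * h2
    have hcard3 : 3 ≤ (Finset.univ.filter fun x : F =>
        Polynomial.eval (x + (x0 + x1)) f + Polynomial.eval x f = b).card := by
      have hsubs : ({x1, x0, x2} : Finset F) ⊆ Finset.univ.filter fun x : F =>
          Polynomial.eval (x + (x0 + x1)) f + Polynomial.eval x f = b := by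
        intro x hx
        rw [Finset.mem_insert, Finset.mem_insert, Finset.mem_singleton] at hx
        rw [Finset.mem_filter]
        exact ⟨Finset.mem_univ _, hsol x hx⟩
      have hc3 : ({x1, x0, x2} : Finset F).card = 3 := by
        rw [Finset.card_insert_of_notMem, Finset.card_insert_of_notMem,
          Finset.card_singleton]
        · rw [Finset.mem_singleton]
          exact hne02'
        · rw [Finset.mem_insert, Finset.mem_singleton]
          push_neg
          exact ⟨fun hh => hne01' hh.symm, fun hh => hne12' hh⟩
      have := Finset.card_le_card hsubs
      omega
    have h3 : 3 ≤ Nat.card {x : F // Polynomial.eval (x + (x0 + x1)) f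
        + Polynomial.eval x f = b} := by
      rw [Nat.card_eq_fintype_card, Fintype.card_subtype]
      exact hcard3
    have happly : Nat.card {x : F // Polynomial.eval (x + (x0 + x1)) f
        + Polynomial.eval x f = b} ≤ 2 := hAPN (x0 + x1) ha b
    omega
  -- bound each plane
  have hB01 : T01.card ≤ (d - 3) * q := by
    refine le_trans ?_ (plane_count φ (d - 3) htotφ ![1, 1, 0] hne01)
    apply Finset.card_le_card_of_injOn (fun p => (p.1, p.2.2))
    · intro p hp
      rw [hT01, Finset.mem_coe, Finset.mem_filter] at hp
      obtain ⟨-, hc, he⟩ := hp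
      rw [Finset.mem_coe, Finset.mem_filter]
      refine ⟨Finset.mem_univ _, ?_⟩
      have hvec : (![p.2.2, p.1] ∘ (![1, 1, 0] : Fin 3 → Fin 2)) = ![p.1, p.2.1, p.2.2] := by
        funext t; fin_cases t <;> simp [he]
      rw [hvec]
      exact hc
    · intro p hp p' hp' hpp
      have hp : p ∈ T01 := hp
      have hp' : p' ∈ T01 := hp'
      rw [hT01, Finset.mem_filter] at hp hp'
      obtain ⟨-, -, he⟩ := hp
      obtain ⟨-, -, he'⟩ := hp'
      have hpp' : (p.1, p.2.2) = (p'.1, p'.2.2) := hpp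
      injection hpp' with h1 h2'
      ext
      · exact h1
      · rw [← he, ← he', h1]
      · exact h2'
  have hB12 : T12.card ≤ (d - 3) * q := by
    refine le_trans ?_ (plane_count φ (d - 3) htotφ ![0, 1, 1] hne12)
    apply Finset.card_le_card_of_injOn (fun p => (p.2.1, p.1))
    · intro p hp
      rw [hT12, Finset.mem_coe, Finset.mem_filter] at hp
      obtain ⟨-, hc, he⟩ := hp
      rw [Finset.mem_coe, Finset.mem_filter]
      refine ⟨Finset.mem_univ _, ?_⟩
      have hvec : (![p.1, p.2.1] ∘ (![0, 1, 1] : Fin 3 → Fin 2)) = ![p.1, p.2.1, p.2.2] := by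
        funext t; fin_cases t <;> simp [he]
      rw [hvec]
      exact hc
    · intro p hp p' hp' hpp
      have hp : p ∈ T12 := hp
      have hp' : p' ∈ T12 := hp'
      rw [hT12, Finset.mem_filter] at hp hp'
      obtain ⟨-, -, he⟩ := hp
      obtain ⟨-, -, he'⟩ := hp'
      have hpp' : (p.2.1, p.1) = (p'.2.1, p'.1) := hpp
      injection hpp' with h1 h2'
      ext
      · exact h2'
      · exact h1
      · rw [← he, ← he', h1]
  have hB02 : T02.card ≤ (d - 3) * q := by
    refine le_trans ?_ (plane_count φ (d - 3) htotφ ![1, 0, 1] hne02)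
    apply Finset.card_le_card_of_injOn (fun p => (p.1, p.2.1))
    · intro p hp
      rw [hT02, Finset.mem_coe, Finset.mem_filter] at hp
      obtain ⟨-, hc, he⟩ := hp
      rw [Finset.mem_coe, Finset.mem_filter]
      refine ⟨Finset.mem_univ _, ?_⟩
      have hvec : (![p.2.1, p.1] ∘ (![1, 0, 1] : Fin 3 → Fin 2)) = ![p.1, p.2.1, p.2.2] := by
        funext t; fin_cases t <;> simp [he]
      rw [hvec]
      exact hc
    · intro p hp p' hp' hpp
      have hp : p ∈ T02 := hp
      have hp' : p' ∈ T02 := hp'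
      rw [hT02, Finset.mem_filter] at hp hp'
      obtain ⟨-, -, he⟩ := hp
      obtain ⟨-, -, he'⟩ := hp'
      have hpp' : (p.1, p.2.1) = (p'.1, p'.2.1) := hpp
      injection hpp' with h1 h2'
      ext
      · exact h1
      · exact h2'
      · rw [← he, ← he', h1]
  calc (Finset.univ.filter cond).card ≤ (T01 ∪ T12 ∪ T02).card := Finset.card_le_card hsub
    _ ≤ (T01 ∪ T12).card + T02.card := Finset.card_union_le _ _
    _ ≤ T01.card + T12.card + T02.card := by
        have := Finset.card_union_le T01 T12
        omega
    _ ≤ (d - 3) * q + (d - 3) * q + (d - 3) * q := by omega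
    _ ≤ 3 * ((d - 3) * q + 1) := by omega


theorem stmt_4 (m : ℕ) (hm : 1 ≤ m) (f : Polynomial (GaloisField 2 m)) (d : ℕ)
    (hdeg : f.natDegree = d) (hd5 : 5 ≤ d)
    (hAPN : IsAPN fun x => Polynomial.eval x f)
    (φ : MvPolynomial (Fin 3) (GaloisField 2 m))
    (hφ : Dpoly (GaloisField 2 m) * φ = Npoly f)
    (hirr : Irreducible (MvPolynomial.map
      (algebraMap (GaloisField 2 m) (AlgebraicClosure (GaloisField 2 m))) φ)) :
    Nat.card {p : GaloisField 2 m × GaloisField 2 m × GaloisField 2 m //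
        MvPolynomial.eval ![p.1, p.2.1, p.2.2] φ = 0} ≤ 3 * ((d - 3) * 2 ^ m + 1) := by
  classical
  letI : Fintype (GaloisField 2 m) := Fintype.ofFinite _
  have hcardF : Fintype.card (GaloisField 2 m) = 2 ^ m := by
    rw [← Nat.card_eq_fintype_card]
    exact GaloisField.card 2 m (by omega)
  have := main_aux (algebraMap (GaloisField 2 m) (AlgebraicClosure (GaloisField 2 m)))
    f d hdeg hd5 hAPN φ hφ hirr
  rwa [hcardF] at this
end

section
/- Let f ∈ F[X] be a polynomial of degree d. If the homogeneous polynomial ψ_d (viewed with coefficients in F) is absolutely irreducible, then the polynomial φ_f is absolutely irreducible. -/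
open MvPolynomial

namespace StmtAux

variable {K : Type*} [Field K] {σ : Type*}

lemma hc_total_ne_zero {p : MvPolynomial σ K} (hp : p ≠ 0) :
    homogeneousComponent p.totalDegree p ≠ 0 := by
  classical
  obtain ⟨d, hd, hsum⟩ := Finset.exists_mem_eq_sup p.support
    (support_nonempty.2 hp) (fun s => s.sum fun _ e => e)
  intro h0
  have hdeg : d.degree = p.totalDegree := by
    rw [show p.totalDegree = d.sum fun _ e => e from hsum]; rfl
  have : coeff d (homogeneousComponent p.totalDegree p) = coeff d p := by
    rw [coeff_homogeneousComponent, if_pos hdeg]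
  rw [h0, coeff_zero] at this
  exact mem_support_iff.1 hd this.symm

lemma tail_lt (p : MvPolynomial σ K) :
    p - homogeneousComponent p.totalDegree p = 0 ∨
    (p - homogeneousComponent p.totalDegree p).totalDegree < p.totalDegree := by
  classical
  set n := p.totalDegree with hn
  set q := p - homogeneousComponent n p with hq
  by_cases h0 : q = 0
  · exact Or.inl h0
  right
  rcases Nat.eq_zero_or_pos n with h | h
  · exfalso
    apply h0
    have hn0 : p.totalDegree = 0 := by omega
    have hhom : p.IsHomogeneous 0 := isHomogeneous_of_totalDegree_zero (σ := σ) hn0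
    have := homogeneousComponent_of_mem ((mem_homogeneousSubmodule _ _).2 hhom) (m := n)
    rw [hq, this, if_pos (h)]
    simp
  have : q.totalDegree = q.support.sup fun s => s.sum fun _ e => e := rfl
  rw [this]
  apply (Finset.sup_lt_iff (by exact h)).2
  intro b hb
  have hcb : coeff b q ≠ 0 := mem_support_iff.1 hb
  have hbd : b.degree ≠ n := by
    intro hbn
    apply hcb
    rw [hq, coeff_sub, coeff_homogeneousComponent, if_pos hbn, sub_self]
  have hcp : coeff b p ≠ 0 := by
    intro hbp
    apply hcb
    rw [hq, coeff_sub, coeff_homogeneousComponent, hbp]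
    split <;> simp
  have hle : (b.sum fun _ e => e) ≤ n := le_totalDegree (mem_support_iff.2 hcp)
  have : (b.sum fun _ e => e) = b.degree := rfl
  omega

lemma comp_mul_zero {u v : MvPolynomial σ K} {du dv : ℕ}
    (hu : u.totalDegree ≤ du) (hv : v = 0 ∨ v.totalDegree < dv) :
    homogeneousComponent (du + dv) (u * v) = 0 := by
  rcases hv with rfl | hv
  · simp
  apply homogeneousComponent_eq_zero
  calc (u * v).totalDegree ≤ u.totalDegree + v.totalDegree := totalDegree_mul _ _
    _ < du + dv := by omega

lemma hc_top_mul (a b : MvPolynomial σ K) :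
    homogeneousComponent (a.totalDegree + b.totalDegree) (a * b)
      = homogeneousComponent a.totalDegree a * homogeneousComponent b.totalDegree b := by
  classical
  have da := a.totalDegree
  set ta := homogeneousComponent a.totalDegree a with hta
  set tb := homogeneousComponent b.totalDegree b with htb
  set da := a.totalDegree with hda
  set db := b.totalDegree with hdb
  have hta_le : ta.totalDegree ≤ da := (homogeneousComponent_isHomogeneous da a).totalDegree_le
  have htb_le : tb.totalDegree ≤ db := (homogeneousComponent_isHomogeneous db b).totalDegree_le
  have ha' := tail_lt a
  have hb' := tail_lt b
  rw [← hta] at ha'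
  rw [← htb] at hb'
  have ha'_le : (a - ta).totalDegree ≤ da := by
    rcases ha' with h | h
    · simp [h]
    · omega
  have hab : a * b = ta * tb + ((a - ta) * tb + (ta * (b - tb) + (a - ta) * (b - tb))) := by ring
  rw [hab, map_add, map_add, map_add]
  have h1 : homogeneousComponent (da + db) ((a - ta) * tb) = 0 := by
    rw [add_comm da db, mul_comm]
    exact comp_mul_zero htb_le ha'
  have h2 : homogeneousComponent (da + db) (ta * (b - tb)) = 0 :=
    comp_mul_zero hta_le hb'
  have h3 : homogeneousComponent (da + db) ((a - ta) * (b - tb)) = 0 :=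
    comp_mul_zero ha'_le hb'
  rw [h1, h2, h3]
  have hmem : ta * tb ∈ homogeneousSubmodule σ K (da + db) :=
    (mem_homogeneousSubmodule _ _).2
      ((homogeneousComponent_isHomogeneous da a).mul (homogeneousComponent_isHomogeneous db b))
  rw [homogeneousComponent_of_mem hmem, if_pos rfl]
  ring

lemma totalDegree_mul_eq {a b : MvPolynomial σ K} (ha : a ≠ 0) (hb : b ≠ 0) :
    (a * b).totalDegree = a.totalDegree + b.totalDegree := by
  refine le_antisymm (totalDegree_mul _ _) ?_
  by_contra hlt
  push_neg at hlt
  have := homogeneousComponent_eq_zero _ _ hlt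
  rw [hc_top_mul a b] at this
  exact mul_ne_zero (hc_total_ne_zero ha) (hc_total_ne_zero hb) this

lemma eq_C_of_totalDegree_eq_zero {p : MvPolynomial σ K} (h : p.totalDegree = 0) :
    p = C (coeff 0 p) := by
  have hhom : p.IsHomogeneous 0 := isHomogeneous_of_totalDegree_zero (σ := σ) h
  have h2 := homogeneousComponent_of_mem ((mem_homogeneousSubmodule _ _).2 hhom) (m := 0)
  rw [if_pos rfl] at h2
  rw [← homogeneousComponent_zero]
  exact h2.symm

lemma irreducible_of_top (p : MvPolynomial σ K) {n : ℕ} (hn : p.totalDegree ≤ n)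
    (h : Irreducible (homogeneousComponent n p)) : Irreducible p := by
  have hp0 : p ≠ 0 := by
    rintro rfl
    rw [map_zero] at h
    exact not_irreducible_zero h
  have hne : homogeneousComponent n p ≠ 0 := h.ne_zero
  have hTn : p.totalDegree = n := by
    refine le_antisymm hn ?_
    by_contra hlt
    push_neg at hlt
    exact hne (homogeneousComponent_eq_zero _ _ hlt)
  constructor
  · intro hu
    obtain ⟨q, hq⟩ := hu.exists_right_inv
    have hq0 : q ≠ 0 := by rintro rfl; simp at hq
    have : p.totalDegree + q.totalDegree = 0 := by
      rw [← totalDegree_mul_eq hp0 hq0, hq, totalDegree_one]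
    have hn0 : n = 0 := by omega
    apply h.not_isUnit
    subst hn0
    rw [homogeneousComponent_zero]
    rw [eq_C_of_totalDegree_eq_zero hTn] at hu
    exact hu
  · intro q r hqr
    have hq0 : q ≠ 0 := by rintro rfl; rw [zero_mul] at hqr; exact hp0 hqr
    have hr0 : r ≠ 0 := by rintro rfl; rw [mul_zero] at hqr; exact hp0 hqr
    have hdeg : q.totalDegree + r.totalDegree = n := by
      rw [← hTn, hqr, totalDegree_mul_eq hq0 hr0]
    have hsplit : homogeneousComponent n p
        = homogeneousComponent q.totalDegree q * homogeneousComponent r.totalDegree r := by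
      rw [hqr, ← hdeg, hc_top_mul q r]
    rcases h.isUnit_or_isUnit hsplit with hu | hu
    · left
      obtain ⟨u, hu2⟩ := hu.exists_right_inv
      have hu0 : homogeneousComponent q.totalDegree q ≠ 0 := by
        rintro h0; rw [h0, zero_mul] at hu2; exact one_ne_zero hu2.symm
      have hdq : q.totalDegree = 0 := by
        have := (homogeneousComponent_isHomogeneous q.totalDegree q).totalDegree hu0
        have hu02 : u ≠ 0 := by rintro rfl; simp at hu2
        have := totalDegree_mul_eq hu0 hu02
        rw [hu2, totalDegree_one] at this
        omega
      rw [eq_C_of_totalDegree_eq_zero hdq]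
      have : coeff 0 q ≠ 0 := by
        intro hc
        apply hq0
        rw [eq_C_of_totalDegree_eq_zero hdq, hc, map_zero]
      exact (isUnit_iff_ne_zero.2 this).map C
    · right
      obtain ⟨u, hu2⟩ := hu.exists_right_inv
      have hu0 : homogeneousComponent r.totalDegree r ≠ 0 := by
        rintro h0; rw [h0, zero_mul] at hu2; exact one_ne_zero hu2.symm
      have hdq : r.totalDegree = 0 := by
        have := (homogeneousComponent_isHomogeneous r.totalDegree r).totalDegree hu0
        have hu02 : u ≠ 0 := by rintro rfl; simp at hu2
        have := totalDegree_mul_eq hu0 hu02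
        rw [hu2, totalDegree_one] at this
        omega
      rw [eq_C_of_totalDegree_eq_zero hdq]
      have : coeff 0 r ≠ 0 := by
        intro hc
        apply hr0
        rw [eq_C_of_totalDegree_eq_zero hdq, hc, map_zero]
      exact (isUnit_iff_ne_zero.2 this).map C

noncomputable def S (K : Type*) [Field K] (k : ℕ) : MvPolynomial (Fin 3) K :=
  X 0 ^ k + X 1 ^ k + X 2 ^ k + (X 0 + X 1 + X 2) ^ k

lemma S_hom (k : ℕ) : (S K k).IsHomogeneous k := by
  have h1 : (X 0 + X 1 + X 2 : MvPolynomial (Fin 3) K).IsHomogeneous 1 :=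
    ((isHomogeneous_X _ _).add (isHomogeneous_X _ _)).add (isHomogeneous_X _ _)
  have h2 : ((X 0 + X 1 + X 2 : MvPolynomial (Fin 3) K) ^ k).IsHomogeneous k := by
    simpa using h1.pow k
  exact (((isHomogeneous_X_pow _ _).add (isHomogeneous_X_pow _ _)).add
    (isHomogeneous_X_pow _ _)).add h2

lemma N_eq (g : Polynomial K) :
    Npoly g = ∑ k ∈ Finset.range (g.natDegree + 1), C (g.coeff k) * S K k := by
  rw [Npoly, Polynomial.aeval_eq_sum_range, Polynomial.aeval_eq_sum_range,
    Polynomial.aeval_eq_sum_range, Polynomial.aeval_eq_sum_range,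
    ← Finset.sum_add_distrib, ← Finset.sum_add_distrib, ← Finset.sum_add_distrib]
  refine Finset.sum_congr rfl fun k _ => ?_
  rw [S, smul_eq_C_mul, smul_eq_C_mul, smul_eq_C_mul, smul_eq_C_mul]
  ring

lemma comp_N {d : ℕ} (g : Polynomial K) (hd : g.natDegree = d) :
    homogeneousComponent d (Npoly g) = C (g.coeff d) * S K d := by
  classical
  rw [N_eq, map_sum]
  rw [Finset.sum_eq_single d]
  · have hmem : C (g.coeff d) * S K d ∈ homogeneousSubmodule (Fin 3) K d :=
      (mem_homogeneousSubmodule _ _).2 ((S_hom d).C_mul _)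
    rw [homogeneousComponent_of_mem hmem, if_pos rfl]
  · intro k _ hk
    have hmem : C (g.coeff k) * S K k ∈ homogeneousSubmodule (Fin 3) K k :=
      (mem_homogeneousSubmodule _ _).2 ((S_hom k).C_mul _)
    rw [homogeneousComponent_of_mem hmem, if_neg (Ne.symm hk)]
  · intro h
    exact absurd (Finset.self_mem_range_succ d) (hd ▸ h)

lemma N_totalDegree_le {d : ℕ} (g : Polynomial K) (hd : g.natDegree = d) :
    (Npoly g).totalDegree ≤ d := by
  rw [N_eq]
  refine (totalDegree_finset_sum _ _).trans (Finset.sup_le fun k hk => ?_)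
  have : (C (g.coeff k) * S K k).totalDegree ≤ k := ((S_hom k).C_mul _).totalDegree_le
  have hk' : k ≤ d := by
    rw [← hd]
    exact Nat.lt_succ_iff.1 (Finset.mem_range.1 hk)
  omega

lemma D_hom : (Dpoly K).IsHomogeneous 3 := by
  have h1 : (X 0 + X 1 : MvPolynomial (Fin 3) K).IsHomogeneous 1 :=
    (isHomogeneous_X _ _).add (isHomogeneous_X _ _)
  have h2 : (X 1 + X 2 : MvPolynomial (Fin 3) K).IsHomogeneous 1 :=
    (isHomogeneous_X _ _).add (isHomogeneous_X _ _)
  have h3 : (X 0 + X 2 : MvPolynomial (Fin 3) K).IsHomogeneous 1 :=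
    (isHomogeneous_X _ _).add (isHomogeneous_X _ _)
  simpa [Dpoly] using (h1.mul h2).mul h3

lemma ne_zero_of_eval_ne_zero {p : MvPolynomial (Fin 3) K} (v : Fin 3 → K)
    (h : eval v p ≠ 0) : p ≠ 0 := by
  intro h0
  rw [h0, map_zero] at h
  exact h rfl

lemma D_ne_zero : (Dpoly K) ≠ 0 := by
  rw [Dpoly]
  refine mul_ne_zero (mul_ne_zero ?_ ?_) ?_
  · exact ne_zero_of_eval_ne_zero (fun i => if i = 0 then (1 : K) else 0) (by simp)
  · exact ne_zero_of_eval_ne_zero (fun i => if i = 1 then (1 : K) else 0) (by simp)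
  · exact ne_zero_of_eval_ne_zero (fun i => if i = 0 then (1 : K) else 0) (by simp)

variable {F : Type*} [Field F] (π : F →+* K)

lemma map_aeval' (x : MvPolynomial (Fin 3) F) (p : Polynomial F) :
    MvPolynomial.map π (Polynomial.aeval x p)
      = Polynomial.aeval (MvPolynomial.map π x) (p.map π) := by
  rw [Polynomial.aeval_def, Polynomial.aeval_def, Polynomial.hom_eval₂, Polynomial.eval₂_map]
  congr 1
  ext r
  simp [algebraMap_eq]

lemma map_Npoly (p : Polynomial F) :
    MvPolynomial.map π (Npoly p) = Npoly (p.map π) := by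
  rw [Npoly, Npoly, map_add, map_add, map_add, map_aeval', map_aeval', map_aeval', map_aeval']
  simp [map_add, map_X]

lemma map_Dpoly : MvPolynomial.map π (Dpoly F) = Dpoly K := by
  simp [Dpoly, map_mul, map_add, map_X]

end StmtAux

set_option maxHeartbeats 1000000 in
theorem stmt_6 (m : ℕ) (hm : 1 ≤ m) (f : Polynomial (GaloisField 2 m)) (d : ℕ)
    (hdeg : f.natDegree = d)
    (φ : MvPolynomial (Fin 3) (GaloisField 2 m))
    (hφ : Dpoly (GaloisField 2 m) * φ = Npoly f)
    (ψ : MvPolynomial (Fin 3) (GaloisField 2 m))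
    (hψ : Dpoly (GaloisField 2 m) * ψ = X 0 ^ d + X 1 ^ d + X 2 ^ d + (X 0 + X 1 + X 2) ^ d)
    (hψirr : Irreducible (MvPolynomial.map
      (algebraMap (GaloisField 2 m) (AlgebraicClosure (GaloisField 2 m))) ψ)) :
    Irreducible (MvPolynomial.map
      (algebraMap (GaloisField 2 m) (AlgebraicClosure (GaloisField 2 m))) φ) := by
  classical
  set F := GaloisField 2 m
  set K := AlgebraicClosure F
  set π := algebraMap F K with hπ
  have hinj : Function.Injective π := π.injective
  set Φ := MvPolynomial.map π φ with hΦdef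
  set Ψ := MvPolynomial.map π ψ with hΨdef
  set g := f.map π with hg
  have hgdeg : g.natDegree = d := by rw [hg, Polynomial.natDegree_map, hdeg]
  have hφK : Dpoly K * Φ = Npoly g := by
    have := congrArg (MvPolynomial.map π) hφ
    rwa [map_mul, StmtAux.map_Dpoly, StmtAux.map_Npoly] at this
  have hψK : Dpoly K * Ψ = StmtAux.S K d := by
    have := congrArg (MvPolynomial.map π) hψ
    rw [map_mul, StmtAux.map_Dpoly] at this
    rw [StmtAux.S]
    rw [this, map_add, map_add, map_add, map_pow, map_pow, map_pow, map_pow,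
      map_add, map_add, map_X, map_X, map_X]
  have hΨ0 : Ψ ≠ 0 := hψirr.ne_zero
  rcases Nat.eq_zero_or_pos d with hd0 | hdpos
  · exfalso
    subst hd0
    haveI : CharP K 2 := charP_of_injective_algebraMap hinj 2
    have h2 : (2 : K) = 0 := by exact_mod_cast CharP.cast_eq_zero K 2
    have hS0 : StmtAux.S K 0 = 0 := by
      rw [StmtAux.S]
      simp only [pow_zero]
      have h4 : (1 + 1 + 1 + 1 : K) = 0 := by
        rw [show (1 + 1 + 1 + 1 : K) = 2 * 2 by norm_num, h2, mul_zero]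
      calc (1 + 1 + 1 + 1 : MvPolynomial (Fin 3) K) = C (1 + 1 + 1 + 1 : K) := by simp
        _ = 0 := by rw [h4, map_zero]
    rw [hS0] at hψK
    exact hΨ0 ((mul_eq_zero.1 hψK).resolve_left StmtAux.D_ne_zero)
  · have hf0 : f ≠ 0 := by
      intro h
      rw [h, Polynomial.natDegree_zero] at hdeg
      omega
    have hc : g.coeff d ≠ 0 := by
      rw [hg, Polynomial.coeff_map]
      intro h
      have hfc : f.coeff d = 0 := hinj (by rwa [map_zero])
      exact (Polynomial.leadingCoeff_ne_zero.2 hf0)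
        (by rwa [Polynomial.leadingCoeff, hdeg])
    set c := g.coeff d with hcdef
    have hcompN : homogeneousComponent d (Npoly g) = C c * (Dpoly K * Ψ) := by
      rw [StmtAux.comp_N g hgdeg, hψK]
    have hCc : (C c : MvPolynomial (Fin 3) K) ≠ 0 := by
      simpa using hc
    have hcomp_ne : homogeneousComponent d (Npoly g) ≠ 0 := by
      rw [hcompN]
      exact mul_ne_zero hCc (mul_ne_zero StmtAux.D_ne_zero hΨ0)
    have hN0 : Npoly g ≠ 0 := fun h => hcomp_ne (by rw [h, map_zero])
    have hΦ0 : Φ ≠ 0 := by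
      intro h
      apply hN0
      rw [← hφK, h, mul_zero]
    have hTN : (Npoly g).totalDegree = d := by
      refine le_antisymm (StmtAux.N_totalDegree_le g hgdeg) ?_
      by_contra hlt
      push_neg at hlt
      exact hcomp_ne (homogeneousComponent_eq_zero _ _ hlt)
    have hTD : (Dpoly K).totalDegree = 3 := StmtAux.D_hom.totalDegree StmtAux.D_ne_zero
    have hsum : 3 + Φ.totalDegree = d := by
      have := StmtAux.totalDegree_mul_eq (StmtAux.D_ne_zero (K := K)) hΦ0
      rw [hφK, hTN, hTD] at this
      omega
    have hDtop : homogeneousComponent (Dpoly K).totalDegree (Dpoly K) = Dpoly K := by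
      rw [hTD, homogeneousComponent_of_mem ((mem_homogeneousSubmodule _ _).2 StmtAux.D_hom),
        if_pos rfl]
    have key : Dpoly K * homogeneousComponent Φ.totalDegree Φ = Dpoly K * (C c * Ψ) := by
      have h1 := StmtAux.hc_top_mul (Dpoly K) Φ
      rw [hDtop, hTD, hsum, hφK, hcompN] at h1
      rw [← h1]
      ring
    have hcompΦ : homogeneousComponent Φ.totalDegree Φ = C c * Ψ :=
      mul_left_cancel₀ StmtAux.D_ne_zero key
    apply StmtAux.irreducible_of_top Φ le_rfl
    rw [hcompΦ]
    have hu : IsUnit (C c : MvPolynomial (Fin 3) K) := (isUnit_iff_ne_zero.2 hc).map C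
    exact ((associated_unit_mul_left Ψ (C c) hu).symm).irreducible hψirr
end

section
/- Let f ∈ F[X] be a polynomial. Then the polynomial X₁ + X₂ divides the partial derivative ∂φ_f/∂X₀ in F[X₀, X₁, X₂]. -/
open MvPolynomial

section Aux

variable {F : Type*} [Field F] [CharP F 2]

lemma aux_dd_zero (f : Polynomial F) :
    Polynomial.derivative (Polynomial.derivative f) = 0 := by
  ext n
  simp only [Polynomial.coeff_derivative, Polynomial.coeff_zero]
  have h : (((n + 2) * (n + 1) : ℕ) : F) = 0 := by
    rw [CharP.cast_eq_zero_iff F 2]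
    have : (n + 2) * (n + 1) = (n + 1) * (n + 1 + 1) := by ring
    rw [this]
    exact (Nat.even_mul_succ_self (n + 1)).two_dvd
  calc f.coeff (n + 1 + 1) * (↑(n + 1) + 1) * (↑n + 1)
      = f.coeff (n + 2) * (((n + 2) * (n + 1) : ℕ) : F) := by push_cast; ring
    _ = 0 := by rw [h, mul_zero]

lemma aux_prime : Prime (X 1 + X 2 : MvPolynomial (Fin 3) F) := by
  have h2 : (2 : MvPolynomial (Fin 3) F) = 0 := by
    simpa using (CharP.cast_eq_zero (MvPolynomial (Fin 3) F) 2)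
  -- the involutive automorphism sending X1 ↦ X1 + X2
  let g : Fin 3 → MvPolynomial (Fin 3) F := ![X 0, X 1 + X 2, X 2]
  have hcomp : (aeval g).comp (aeval g) = AlgHom.id F (MvPolynomial (Fin 3) F) := by
    apply MvPolynomial.algHom_ext
    intro i
    fin_cases i
    · simp [g]
    · simp only [AlgHom.coe_comp, Function.comp_apply, aeval_X, AlgHom.coe_id, id_eq]
      show aeval g (X 1 + X 2) = X 1
      simp only [map_add, aeval_X]
      show (X 1 + X 2) + X 2 = (X 1 : MvPolynomial (Fin 3) F)
      linear_combination (X 2 : MvPolynomial (Fin 3) F) * h2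
    · simp [g]
  let e : MvPolynomial (Fin 3) F ≃ₐ[F] MvPolynomial (Fin 3) F :=
    AlgEquiv.ofAlgHom (aeval g) (aeval g) hcomp hcomp
  have hx0 : Prime (X 0 : MvPolynomial (Fin 3) F) := by
    rw [← MulEquiv.prime_iff (finSuccEquiv F 2).toMulEquiv]
    have : (finSuccEquiv F 2).toMulEquiv (X 0 : MvPolynomial (Fin 3) F) = Polynomial.X := by
      simpa using finSuccEquiv_X_zero (R := F) (n := 2)
    rw [this]
    exact Polynomial.prime_X
  have hx1 : Prime (X 1 : MvPolynomial (Fin 3) F) := by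
    rw [← MulEquiv.prime_iff (renameEquiv F (Equiv.swap (0 : Fin 3) 1)).toMulEquiv]
    have : (renameEquiv F (Equiv.swap (0 : Fin 3) 1)).toMulEquiv
        (X 1 : MvPolynomial (Fin 3) F) = X 0 := by
      simp [renameEquiv]
    rwa [this]
  have he : e (X 1) = X 1 + X 2 := by
    show aeval g (X 1) = X 1 + X 2
    simp [g]
  rw [← he]
  exact ((MulEquiv.prime_iff (p := X 1) e.toMulEquiv).mpr (by simpa using hx1))

end Aux

theorem stmt_12 (m : ℕ) (hm : 1 ≤ m) (f : Polynomial (GaloisField 2 m))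
    (φ : MvPolynomial (Fin 3) (GaloisField 2 m))
    (hφ : Dpoly (GaloisField 2 m) * φ = Npoly f) :
    (X 1 + X 2 : MvPolynomial (Fin 3) (GaloisField 2 m)) ∣ MvPolynomial.pderiv 0 φ := by
  set F := GaloisField 2 m with hF
  have h2 : (2 : MvPolynomial (Fin 3) F) = 0 := by
    simpa using (CharP.cast_eq_zero (MvPolynomial (Fin 3) F) 2)
  set t : MvPolynomial (Fin 3) F := X 1 + X 2 with ht
  -- derivative of f is a polynomial in squares
  set h : Polynomial F := Polynomial.contract 2 (Polynomial.derivative f) with hh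
  have hexp : Polynomial.expand F 2 h = Polynomial.derivative f :=
    Polynomial.expand_contract 2 (aux_dd_zero f) two_ne_zero
  -- differentiate the hypothesis
  have hD := congrArg (pderiv (0 : Fin 3)) hφ
  rw [pderiv_mul] at hD
  have hDdef : Dpoly F = (X 0 + X 1) * (X 1 + X 2) * (X 0 + X 2) := rfl
  have hpD : pderiv (0 : Fin 3) (Dpoly F) = t ^ 2 := by
    rw [hDdef]
    rw [pderiv_mul, pderiv_mul]
    simp only [map_add, pderiv_X_self, pderiv_X_of_ne (by decide : (1 : Fin 3) ≠ 0),
      pderiv_X_of_ne (by decide : (2 : Fin 3) ≠ 0)]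
    rw [ht]
    linear_combination (X 0 * (X 1 + X 2) : MvPolynomial (Fin 3) F) * h2
  have hpN : pderiv (0 : Fin 3) (Npoly f) =
      Polynomial.aeval ((X 0 : MvPolynomial (Fin 3) F) ^ 2) h +
        Polynomial.aeval ((X 0 + X 1 + X 2 : MvPolynomial (Fin 3) F) ^ 2) h := by
    rw [Npoly]
    simp only [map_add, Derivation.map_aeval, pderiv_X_self,
      pderiv_X_of_ne (by decide : (1 : Fin 3) ≠ 0),
      pderiv_X_of_ne (by decide : (2 : Fin 3) ≠ 0), smul_eq_mul, mul_one, mul_zero,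
      add_zero, zero_add]
    rw [← hexp, Polynomial.expand_aeval, Polynomial.expand_aeval]
  -- t^2 divides pderiv 0 (Npoly f)
  have key : t ^ 2 ∣ pderiv (0 : Fin 3) (Npoly f) := by
    rw [hpN]
    have hs := Polynomial.sub_dvd_eval_sub ((X 0 + X 1 + X 2 : MvPolynomial (Fin 3) F) ^ 2)
      ((X 0 : MvPolynomial (Fin 3) F) ^ 2) (h.map (algebraMap F (MvPolynomial (Fin 3) F)))
    rw [Polynomial.eval_map, Polynomial.eval_map, ← Polynomial.aeval_def,
      ← Polynomial.aeval_def] at hs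
    have hfac : (X 0 + X 1 + X 2 : MvPolynomial (Fin 3) F) ^ 2 -
        (X 0 : MvPolynomial (Fin 3) F) ^ 2 = t ^ 2 := by
      rw [ht]
      linear_combination (X 0 * X 1 + X 0 * X 2 : MvPolynomial (Fin 3) F) * h2
    rw [hfac] at hs
    have heq : Polynomial.aeval ((X 0 : MvPolynomial (Fin 3) F) ^ 2) h +
        Polynomial.aeval ((X 0 + X 1 + X 2 : MvPolynomial (Fin 3) F) ^ 2) h =
        Polynomial.aeval ((X 0 + X 1 + X 2 : MvPolynomial (Fin 3) F) ^ 2) h -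
          Polynomial.aeval ((X 0 : MvPolynomial (Fin 3) F) ^ 2) h := by
      linear_combination (Polynomial.aeval ((X 0 : MvPolynomial (Fin 3) F) ^ 2) h) * h2
    rw [heq]
    exact hs
  obtain ⟨ψ, hψ⟩ := key
  rw [hpD, hψ] at hD
  -- t ≠ 0
  have hne : t ≠ 0 := by
    intro hc
    have := congrArg (eval ![(0 : F), 1, 0]) hc
    simp [ht] at this
  -- cancel one factor of t
  have hcancel : (X 0 + X 1) * ((X 0 + X 2) * pderiv (0 : Fin 3) φ) = t * (ψ - φ) := by
    apply mul_left_cancel₀ hne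
    rw [hDdef, ht] at hD
    linear_combination hD
  have hdvd : t ∣ (X 0 + X 1) * ((X 0 + X 2) * pderiv (0 : Fin 3) φ) := ⟨ψ - φ, hcancel⟩
  have hp : Prime t := aux_prime
  have hnd1 : ¬ t ∣ (X 0 + X 1 : MvPolynomial (Fin 3) F) := by
    intro hc
    have := map_dvd (eval ![(1 : F), 0, 0]) hc
    simp [ht] at this
  have hnd2 : ¬ t ∣ (X 0 + X 2 : MvPolynomial (Fin 3) F) := by
    intro hc
    have := map_dvd (eval ![(1 : F), 0, 0]) hc
    simp [ht] at this
  rcases hp.2.2 _ _ hdvd with hc | hc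
  · exact absurd hc hnd1
  · rcases hp.2.2 _ _ hc with hc' | hc'
    · exact absurd hc' hnd2
    · exact hc'
end

section
/- Let f ∈ F[X] be a polynomial. Then for every u ∈ F, all three partial derivatives of φ_f vanish at the diagonal point: (∂φ_f/∂X₀)(u, u, u) = (∂φ_f/∂X₁)(u, u, u) = (∂φ_f/∂X₂)(u, u, u) = 0. In particular, every point of the affine surface φ_f = 0 lying on the line x₀ = x₁ = x₂ is a singular point of that surface. -/
open MvPolynomial

section Aux

variable {F : Type*} [Field F]

lemma pderiv_polyaeval (i : Fin 3) (g : MvPolynomial (Fin 3) F) (f : Polynomial F) :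
    MvPolynomial.pderiv i (Polynomial.aeval g f) =
      Polynomial.aeval g (Polynomial.derivative f) * MvPolynomial.pderiv i g := by
  induction f using Polynomial.induction_on' with
  | add p q hp hq => simp [hp, hq, add_mul]
  | monomial n a =>
      cases n with
      | zero => simp
      | succ n =>
        simp [Polynomial.aeval_monomial, Polynomial.derivative_monomial, pderiv_pow,
          algebraMap_eq, mul_comm, mul_assoc, mul_left_comm]

lemma deriv2_char2 [CharP F 2] (f : Polynomial F) :
    Polynomial.derivative (Polynomial.derivative f) = 0 := by
  induction f using Polynomial.induction_on' with
  | add p q hp hq => simp [hp, hq]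
  | monomial n a =>
      match n with
      | 0 => simp
      | 1 => simp
      | (j+2) =>
        rw [Polynomial.derivative_monomial, Polynomial.derivative_monomial]
        have h2 : (((j+2) : ℕ) : F) * (((j+1) : ℕ) : F) = 0 := by
          rw [← Nat.cast_mul, CharP.cast_eq_zero_iff F 2]
          rcases Nat.even_mul_succ_self (j+1) with ⟨k, hk⟩
          exact ⟨k, by linarith [hk]⟩
        show (Polynomial.monomial (j + 2 - 1 - 1)) (a * ↑(j + 2) * ↑(j + 2 - 1)) = 0
        norm_num
        push_cast at h2
        rcases mul_eq_zero.mp h2 with h | h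
        · exact Or.inl (Or.inr h)
        · exact Or.inr h

lemma X_add_X_ne (i j : Fin 3) (h : i ≠ j) : (X i + X j : MvPolynomial (Fin 3) F) ≠ 0 := by
  intro hc
  have := congrArg (fun p => MvPolynomial.eval (fun l => if l = i then (1:F) else 0) p) hc
  simp [h, h.symm] at this

lemma key2 [CharP F 2] (f : Polynomial F) (φ : MvPolynomial (Fin 3) F)
    (hφ : Dpoly F * φ = Npoly f) :
    bind₁ ![X 0, X 0, X 2] (pderiv 2 φ) = (0 : MvPolynomial (Fin 3) F) := by
  have h1 : pderiv 0 (pderiv 2 (Dpoly F * φ)) = pderiv 0 (pderiv 2 (Npoly f)) := by rw [hφ]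
  have hN : pderiv 0 (pderiv 2 (Npoly f)) = 0 := by
    simp [Npoly, pderiv_polyaeval, deriv2_char2, apply_ite (pderiv (0 : Fin 3))]
  rw [hN, pderiv_mul, map_add, pderiv_mul, pderiv_mul] at h1
  have h2 := congrArg (bind₁ (![X 0, X 0, X 2] : Fin 3 → MvPolynomial (Fin 3) F)) h1
  simp [Dpoly, pderiv_mul, pderiv_X, Pi.single_apply, Matrix.cons_val_zero, Matrix.cons_val_one,
    Matrix.head_cons, Matrix.cons_val_two, Matrix.tail_cons, CharTwo.add_self_eq_zero,
    add_comm, add_assoc, add_left_comm] at h2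
  rcases h2 with h | h
  · exact absurd h (X_add_X_ne 0 2 (by decide))
  · exact h

lemma key0 [CharP F 2] (f : Polynomial F) (φ : MvPolynomial (Fin 3) F)
    (hφ : Dpoly F * φ = Npoly f) :
    bind₁ ![X 0, X 1, X 1] (pderiv 0 φ) = (0 : MvPolynomial (Fin 3) F) := by
  have h1 : pderiv 1 (pderiv 0 (Dpoly F * φ)) = pderiv 1 (pderiv 0 (Npoly f)) := by rw [hφ]
  have hN : pderiv 1 (pderiv 0 (Npoly f)) = 0 := by
    simp [Npoly, pderiv_polyaeval, deriv2_char2, apply_ite (pderiv (1 : Fin 3))]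
  rw [hN, pderiv_mul, map_add, pderiv_mul, pderiv_mul] at h1
  have h2 := congrArg (bind₁ (![X 0, X 1, X 1] : Fin 3 → MvPolynomial (Fin 3) F)) h1
  simp [Dpoly, pderiv_mul, pderiv_X, Pi.single_apply, Matrix.cons_val_zero, Matrix.cons_val_one,
    Matrix.head_cons, Matrix.cons_val_two, Matrix.tail_cons, CharTwo.add_self_eq_zero,
    add_comm, add_assoc, add_left_comm] at h2
  rcases h2 with h | h
  · exact absurd h (X_add_X_ne 0 1 (by decide))
  · exact h

set_option maxHeartbeats 1000000 in
lemma key1 [CharP F 2] (f : Polynomial F) (φ : MvPolynomial (Fin 3) F)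
    (hφ : Dpoly F * φ = Npoly f) :
    bind₁ ![X 0, X 1, X 0] (pderiv 1 φ) = (0 : MvPolynomial (Fin 3) F) := by
  have h1 : pderiv 0 (pderiv 1 (Dpoly F * φ)) = pderiv 0 (pderiv 1 (Npoly f)) := by rw [hφ]
  have hN : pderiv 0 (pderiv 1 (Npoly f)) = 0 := by
    simp [Npoly, pderiv_polyaeval, deriv2_char2, apply_ite (pderiv (0 : Fin 3))]
  rw [hN, pderiv_mul, map_add, pderiv_mul, pderiv_mul] at h1
  have h2 := congrArg (bind₁ (![X 0, X 1, X 0] : Fin 3 → MvPolynomial (Fin 3) F)) h1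
  simp [Dpoly, pderiv_mul, pderiv_X, Pi.single_apply, Matrix.cons_val_zero, Matrix.cons_val_one,
    Matrix.head_cons, Matrix.cons_val_two, Matrix.tail_cons, CharTwo.add_self_eq_zero,
    add_comm, add_assoc, add_left_comm] at h2
  rcases h2 with h | h
  · exact absurd h (X_add_X_ne 0 1 (by decide))
  · exact h

lemma eval_diag_of_bind_eq_zero (u : F) (p : MvPolynomial (Fin 3) F)
    (s : Fin 3 → MvPolynomial (Fin 3) F) (hs : ∀ l, ∃ l', s l = X l')
    (h : bind₁ s p = 0) : MvPolynomial.eval (fun _ => u) p = 0 := by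
  have h3 := congrArg (aeval (fun _ : Fin 3 => u)) h
  rw [aeval_bind₁] at h3
  have hfun : (fun i => aeval (fun _ : Fin 3 => u) (s i)) = fun _ : Fin 3 => u := by
    funext l
    obtain ⟨l', hl⟩ := hs l
    simp [hl]
  rw [hfun, map_zero] at h3
  rw [← coe_aeval_eq_eval]
  exact h3

end Aux

theorem stmt_13 (m : ℕ) (hm : 1 ≤ m) (f : Polynomial (GaloisField 2 m))
    (φ : MvPolynomial (Fin 3) (GaloisField 2 m))
    (hφ : Dpoly (GaloisField 2 m) * φ = Npoly f) :
    ∀ u : GaloisField 2 m, ∀ i : Fin 3,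
      MvPolynomial.eval (fun _ => u) (MvPolynomial.pderiv i φ) = 0 := by
  intro u i
  fin_cases i
  · exact eval_diag_of_bind_eq_zero u _ _
      (fun l => by fin_cases l <;> exact ⟨_, rfl⟩) (key0 f φ hφ)
  · exact eval_diag_of_bind_eq_zero u _ _
      (fun l => by fin_cases l <;> exact ⟨_, rfl⟩) (key1 f φ hφ)
  · exact eval_diag_of_bind_eq_zero u _ _
      (fun l => by fin_cases l <;> exact ⟨_, rfl⟩) (key2 f φ hφ)
end

section
/- Let Φ ∈ F[X₀, X₁, X₂] (where F = 𝔽_{2^m}) be a sum Φ = Φ_r + Φ_d of two nonzero homogeneous polynomials, with Φ_i homogeneous of degree i and r < d. Suppose that the images of Φ_r and Φ_d in the polynomial ring over an algebraic closure of F have no common non-unit factor, and that either (i) the image of Φ_r over the algebraic closure is squarefree and r ≥ 1, or (ii) the image of Φ_d over the algebraic closure is squarefree and r ≥ 0. Then Φ is absolutely irreducible over F, i.e. its image in the polynomial ring over an algebraic closure of F is irreducible. -/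
open MvPolynomial

namespace Stmt15Aux

open Polynomial

variable {R : Type*} [CommRing R] [IsDomain R]

/-- Core combinatorial lemma: if `P * Q = C A + C B * X ^ s` with `s` the sum of the
(positive) degrees of `P` and `Q`, and the constant coefficients of `P` and `Q` are
relatively prime, then `A ∣ B`. -/
lemma core [DecompositionMonoid R] {P Q : R[X]} {A B : R} {s : ℕ}
    (h : P * Q = Polynomial.C A + Polynomial.C B * Polynomial.X ^ s)
    (hs : P.natDegree + Q.natDegree = s)
    (hP : 1 ≤ P.natDegree) (hQ : 1 ≤ Q.natDegree)
    (hcop : IsRelPrime (P.coeff 0) (Q.coeff 0)) : A ∣ B := by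
  have hs1 : 1 ≤ s := by omega
  have key : ∀ t, t < s → P.coeff 0 ∣ P.coeff t ∧ Q.coeff 0 ∣ Q.coeff t := by
    intro t
    induction t using Nat.strong_induction_on with
    | _ t ih =>
      intro hts
      rcases Nat.eq_zero_or_pos t with rfl | ht
      · exact ⟨dvd_rfl, dvd_rfl⟩
      have hcoeff : (P * Q).coeff t = 0 := by
        rw [h]
        rw [Polynomial.coeff_add, Polynomial.coeff_C, if_neg (by omega : ¬ t = 0),
          Polynomial.coeff_C_mul, Polynomial.coeff_X_pow, if_neg (Nat.ne_of_lt hts),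
          mul_zero, zero_add]
      rw [Polynomial.coeff_mul,
        Finset.Nat.sum_antidiagonal_eq_sum_range_succ
          (fun i j => P.coeff i * Q.coeff j)] at hcoeff
      constructor
      · rw [Finset.sum_range_succ] at hcoeff
        have h1 : P.coeff 0 ∣ ∑ i ∈ Finset.range t, P.coeff i * Q.coeff (t - i) :=
          Finset.dvd_sum fun i hi =>
            ((ih i (Finset.mem_range.1 hi) (lt_trans (Finset.mem_range.1 hi) hts)).1).mul_right _
        have h2 : P.coeff 0 ∣ P.coeff t * Q.coeff (t - t) := by
          have heq : P.coeff t * Q.coeff (t - t) =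
              -∑ i ∈ Finset.range t, P.coeff i * Q.coeff (t - i) := by
            linear_combination hcoeff
          rw [heq]
          exact h1.neg_right
        rw [Nat.sub_self] at h2
        exact hcop.dvd_of_dvd_mul_right h2
      · rw [Finset.sum_range_succ'] at hcoeff
        have h1 : Q.coeff 0 ∣ ∑ i ∈ Finset.range t, P.coeff (i + 1) * Q.coeff (t - (i + 1)) :=
          Finset.dvd_sum fun i hi =>
            ((ih (t - (i + 1)) (by omega) (by omega)).2).mul_left _
        have h2 : Q.coeff 0 ∣ P.coeff 0 * Q.coeff (t - 0) := by
          have heq : P.coeff 0 * Q.coeff (t - 0) =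
              -∑ i ∈ Finset.range t, P.coeff (i + 1) * Q.coeff (t - (i + 1)) := by
            linear_combination hcoeff
          rw [heq]
          exact h1.neg_right
        rw [Nat.sub_zero] at h2
        exact hcop.symm.dvd_of_dvd_mul_left h2
  have hA : P.coeff 0 * Q.coeff 0 = A := by
    have h2 : (P * Q).coeff 0 = A := by
      rw [h, Polynomial.coeff_add, Polynomial.coeff_C, if_pos rfl, Polynomial.coeff_C_mul,
        Polynomial.coeff_X_pow, if_neg (by omega : ¬ (0 : ℕ) = s), mul_zero, add_zero]
    rwa [Polynomial.mul_coeff_zero] at h2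
  have hB : P.coeff P.natDegree * Q.coeff Q.natDegree = B := by
    have h2 : (P * Q).coeff s = B := by
      rw [h, Polynomial.coeff_add, Polynomial.coeff_C, if_neg (by omega : ¬ s = 0),
        Polynomial.coeff_C_mul, Polynomial.coeff_X_pow, if_pos rfl, mul_one, zero_add]
    rw [← hs, Polynomial.coeff_mul_degree_add_degree, Polynomial.leadingCoeff,
      Polynomial.leadingCoeff] at h2
    exact h2
  rw [← hA, ← hB]
  exact mul_dvd_mul (key P.natDegree (by omega)).1 (key Q.natDegree (by omega)).2

variable {σ : Type*}

/-- The map sending `X i` to `C (X i) * X`, i.e. recording the homogeneous components of a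
multivariate polynomial as the coefficients of a univariate polynomial. -/
noncomputable def phi : MvPolynomial σ R →+* Polynomial (MvPolynomial σ R) :=
  eval₂Hom (Polynomial.C.comp MvPolynomial.C)
    fun i => Polynomial.C (MvPolynomial.X i) * Polynomial.X

lemma phi_monomial (u : σ →₀ ℕ) (c : R) :
    phi (monomial u c) = Polynomial.C (monomial u c) * Polynomial.X ^ (u.degree) := by
  rw [phi, eval₂Hom_monomial, monomial_eq]
  simp only [RingHom.coe_comp, Function.comp_apply, map_mul]
  rw [Finsupp.prod, Finsupp.prod, Finsupp.degree_apply]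
  simp only [mul_pow, ← Polynomial.C_pow]
  rw [Finset.prod_mul_distrib, ← map_prod, Finset.prod_pow_eq_pow_sum]
  ring

lemma coeff_phi (p : MvPolynomial σ R) (j : ℕ) :
    (phi p).coeff j = homogeneousComponent j p := by
  conv_lhs => rw [← p.support_sum_monomial_coeff]
  conv_rhs => rw [← p.support_sum_monomial_coeff]
  rw [map_sum, Polynomial.finset_sum_coeff, map_sum]
  refine Finset.sum_congr rfl fun v _ => ?_
  rw [phi_monomial, Polynomial.coeff_C_mul, Polynomial.coeff_X_pow,
    homogeneousComponent_of_mem ((mem_homogeneousSubmodule _ _).2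
      (isHomogeneous_monomial _ rfl))]
  rcases eq_or_ne v.degree j with hj | hj
  · subst hj; simp
  · simp [hj, Ne.symm hj]

lemma phi_eq_zero_iff (p : MvPolynomial σ R) : phi p = 0 ↔ p = 0 := by
  constructor
  · intro h
    rw [← p.sum_homogeneousComponent]
    refine Finset.sum_eq_zero fun i _ => ?_
    rw [← coeff_phi, h, Polynomial.coeff_zero]
  · rintro rfl; exact map_zero _

lemma phi_isHomogeneous {p : MvPolynomial σ R} {k : ℕ} (h : p.IsHomogeneous k) :
    phi p = Polynomial.C p * Polynomial.X ^ k := by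
  ext j
  rw [coeff_phi, Polynomial.coeff_C_mul, Polynomial.coeff_X_pow,
    homogeneousComponent_of_mem ((mem_homogeneousSubmodule _ _).2 h)]
  rcases eq_or_ne j k with hj | hj
  · subst hj; simp
  · simp [hj, Ne.symm hj]

lemma not_isUnit_of_isHomogeneous {p : MvPolynomial σ R} {k : ℕ} (h : p.IsHomogeneous k)
    (hk : 1 ≤ k) (hp : p ≠ 0) : ¬ IsUnit p := by
  intro hu
  have h2 : IsUnit (phi p) := hu.map phi
  rw [phi_isHomogeneous h] at h2
  have h3 := Polynomial.natDegree_eq_zero_of_isUnit h2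
  rw [Polynomial.natDegree_C_mul_X_pow k p hp] at h3
  omega

/-- A homogeneous divisor of `A + B` (with `A`, `B` homogeneous of degrees `r < d`)
divides both `A` and `B`. -/
lemma homog_dvd {A B w z : MvPolynomial σ R} {r d a : ℕ} (hrd : r < d)
    (hA : A.IsHomogeneous r) (hB : B.IsHomogeneous d)
    (hw : w.IsHomogeneous a) (hmul : w * z = A + B) : w ∣ A ∧ w ∣ B := by
  have key : phi w * phi z = Polynomial.C A * Polynomial.X ^ r
      + Polynomial.C B * Polynomial.X ^ d := by
    rw [← map_mul, hmul, map_add, phi_isHomogeneous hA, phi_isHomogeneous hB]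
  rw [phi_isHomogeneous hw] at key
  have key' : Polynomial.X ^ a * (Polynomial.C w * phi z) = Polynomial.C A * Polynomial.X ^ r
      + Polynomial.C B * Polynomial.X ^ d := by rw [← key]; ring
  constructor
  · have h1 := congrArg (fun p => Polynomial.coeff p r) key'
    simp only [Polynomial.coeff_X_pow_mul', Polynomial.coeff_add, Polynomial.coeff_C_mul,
      Polynomial.coeff_X_pow] at h1
    rw [if_neg (show ¬ r = d by omega), mul_zero, add_zero] at h1
    norm_num at h1
    by_cases har : a ≤ r
    · rw [if_pos har] at h1
      exact ⟨_, h1.symm⟩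
    · rw [if_neg har] at h1
      rw [← h1]
      exact dvd_zero w
  · have h1 := congrArg (fun p => Polynomial.coeff p d) key'
    simp only [Polynomial.coeff_X_pow_mul', Polynomial.coeff_add, Polynomial.coeff_C_mul,
      Polynomial.coeff_X_pow] at h1
    rw [if_neg (show ¬ d = r by omega), mul_zero, zero_add] at h1
    norm_num at h1
    by_cases had : a ≤ d
    · rw [if_pos had] at h1
      exact ⟨_, h1.symm⟩
    · rw [if_neg had] at h1
      rw [← h1]
      exact dvd_zero w

/-- The main irreducibility criterion. -/
lemma main {K : Type*} [Field K] {r d : ℕ} (hrd : r < d)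
    {A B : MvPolynomial (Fin 3) K} (hA : A.IsHomogeneous r) (hB : B.IsHomogeneous d)
    (hA0 : A ≠ 0) (hB0 : B ≠ 0) (hcop : IsRelPrime A B)
    (hsq : (Squarefree A ∧ 1 ≤ r) ∨ Squarefree B) : Irreducible (A + B) := by
  have hd1 : 1 ≤ d := by omega
  have hphiAB : phi (A + B) = Polynomial.C A * Polynomial.X ^ r
      + Polynomial.C B * Polynomial.X ^ d := by
    rw [map_add, phi_isHomogeneous hA, phi_isHomogeneous hB]
  have hcoeffd : (phi (A + B)).coeff d = B := by
    rw [hphiAB, Polynomial.coeff_add, Polynomial.coeff_C_mul, Polynomial.coeff_C_mul,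
      Polynomial.coeff_X_pow, Polynomial.coeff_X_pow, if_neg (show ¬ d = r by omega),
      if_pos (show d = d from rfl), mul_zero, mul_one, zero_add]
  have hAB0 : A + B ≠ 0 := by
    intro h
    rw [h, map_zero] at hcoeffd
    exact hB0 (by simpa using hcoeffd.symm)
  constructor
  · intro hu
    have h2 : IsUnit (phi (A + B)) := hu.map phi
    have h3 := Polynomial.natDegree_eq_zero_of_isUnit h2
    have h4 : d ≤ (phi (A + B)).natDegree :=
      Polynomial.le_natDegree_of_ne_zero (by rw [hcoeffd]; exact hB0)
    omega
  · intro u v huv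
    by_contra hcon
    push_neg at hcon
    obtain ⟨hu, hv⟩ := hcon
    have hu0 : u ≠ 0 := by rintro rfl; exact hAB0 (by simpa using huv)
    have hv0 : v ≠ 0 := by rintro rfl; exact hAB0 (by simpa using huv)
    have hphiu0 : phi u ≠ 0 := fun h => hu0 ((phi_eq_zero_iff u).1 h)
    have hphiv0 : phi v ≠ 0 := fun h => hv0 ((phi_eq_zero_iff v).1 h)
    set s : ℕ := d - r with hs_def
    have hs1 : 1 ≤ s := by omega
    have hkey : phi u * phi v = Polynomial.X ^ r *
        (Polynomial.C A + Polynomial.C B * Polynomial.X ^ s) := by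
      rw [← map_mul, ← huv, hphiAB, mul_add]
      rw [show Polynomial.X ^ r * (Polynomial.C B * Polynomial.X ^ s)
          = Polynomial.C B * (Polynomial.X ^ r * Polynomial.X ^ s) by ring, ← pow_add]
      rw [show r + s = d by omega]
      ring
    have hRc0 : (Polynomial.C A + Polynomial.C B * Polynomial.X ^ s :
        (MvPolynomial (Fin 3) K)[X]).coeff 0 = A := by
      rw [Polynomial.coeff_add, Polynomial.coeff_C, if_pos rfl, Polynomial.coeff_C_mul,
        Polynomial.coeff_X_pow, if_neg (show ¬ (0 : ℕ) = s by omega), mul_zero, add_zero]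
    have hR0 : (Polynomial.C A + Polynomial.C B * Polynomial.X ^ s :
        (MvPolynomial (Fin 3) K)[X]) ≠ 0 := by
      intro h
      rw [h, Polynomial.coeff_zero] at hRc0
      exact hA0 hRc0.symm
    have hRtd : (Polynomial.C A + Polynomial.C B * Polynomial.X ^ s :
        (MvPolynomial (Fin 3) K)[X]).natTrailingDegree = 0 := by
      rw [Polynomial.natTrailingDegree_eq_zero]
      right
      rw [hRc0]
      exact hA0
    have hRnd : (Polynomial.C A + Polynomial.C B * Polynomial.X ^ s :
        (MvPolynomial (Fin 3) K)[X]).natDegree = s := by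
      apply le_antisymm
      · refine le_trans (Polynomial.natDegree_add_le _ _) ?_
        simp only [Polynomial.natDegree_C, max_le_iff]
        exact ⟨Nat.zero_le _, Polynomial.natDegree_C_mul_X_pow_le _ _⟩
      · apply Polynomial.le_natDegree_of_ne_zero
        rw [Polynomial.coeff_add, Polynomial.coeff_C, if_neg (show ¬ s = 0 by omega),
          Polynomial.coeff_C_mul, Polynomial.coeff_X_pow, if_pos (show s = s from rfl),
          mul_one, zero_add]
        exact hB0
    set a : ℕ := (phi u).natTrailingDegree with ha_def
    set c : ℕ := (phi v).natTrailingDegree with hc_def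
    have hac : a + c = r := by
      have h1 : (phi u * phi v).natTrailingDegree = a + c :=
        Polynomial.natTrailingDegree_mul hphiu0 hphiv0
      rw [hkey, Polynomial.natTrailingDegree_mul (pow_ne_zero _ Polynomial.X_ne_zero) hR0,
        Polynomial.natTrailingDegree_X_pow, hRtd, add_zero] at h1
      omega
    obtain ⟨P, hP⟩ : (Polynomial.X : (MvPolynomial (Fin 3) K)[X]) ^ a ∣ phi u :=
      Polynomial.X_pow_dvd_iff.2 fun i hi =>
        Polynomial.coeff_eq_zero_of_lt_natTrailingDegree hi
    obtain ⟨Q, hQ⟩ : (Polynomial.X : (MvPolynomial (Fin 3) K)[X]) ^ c ∣ phi v :=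
      Polynomial.X_pow_dvd_iff.2 fun i hi =>
        Polynomial.coeff_eq_zero_of_lt_natTrailingDegree hi
    have hP0 : P.coeff 0 ≠ 0 := by
      have h5 : (phi u).coeff a = P.coeff 0 := by
        rw [hP]
        simpa using Polynomial.coeff_X_pow_mul P a 0
      rw [← h5]
      exact Polynomial.coeff_natTrailingDegree_ne_zero.2 hphiu0
    have hQ0 : Q.coeff 0 ≠ 0 := by
      have h5 : (phi v).coeff c = Q.coeff 0 := by
        rw [hQ]
        simpa using Polynomial.coeff_X_pow_mul Q c 0
      rw [← h5]
      exact Polynomial.coeff_natTrailingDegree_ne_zero.2 hphiv0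
    have hPQ : P * Q = Polynomial.C A + Polynomial.C B * Polynomial.X ^ s := by
      have hX : (Polynomial.X : (MvPolynomial (Fin 3) K)[X]) ^ r ≠ 0 :=
        pow_ne_zero _ Polynomial.X_ne_zero
      apply mul_left_cancel₀ hX
      calc Polynomial.X ^ r * (P * Q)
          = (Polynomial.X ^ a * P) * (Polynomial.X ^ c * Q) := by
            rw [← hac]; ring
        _ = phi u * phi v := by rw [← hP, ← hQ]
        _ = _ := hkey
    have hPne : P ≠ 0 := fun h => hP0 (by rw [h]; simp)
    have hQne : Q ≠ 0 := fun h => hQ0 (by rw [h]; simp)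
    have hnd : P.natDegree + Q.natDegree = s := by
      have := Polynomial.natDegree_mul hPne hQne
      rw [hPQ, hRnd] at this
      omega
    -- if a factor is homogeneous we contradict coprimality
    have homog_case : ∀ w z : MvPolynomial (Fin 3) K, w * z = A + B → ¬ IsUnit w →
        (∃ k, w.IsHomogeneous k) → False := by
      rintro w z hwz hwu ⟨k, hk⟩
      obtain ⟨h1, h2⟩ := homog_dvd hrd hA hB hk hwz
      exact hwu (hcop h1 h2)
    have hconst : ∀ (w : MvPolynomial (Fin 3) K) (W : (MvPolynomial (Fin 3) K)[X]) (b : ℕ),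
        phi w = Polynomial.X ^ b * W → W.natDegree = 0 → w.IsHomogeneous b := by
      intro w W b hWdef hWnd
      have hzero : ∀ j, j ≠ b → homogeneousComponent j w = 0 := by
        intro j hj
        rw [← coeff_phi, hWdef, Polynomial.coeff_X_pow_mul']
        split_ifs with hle
        · exact Polynomial.coeff_eq_zero_of_natDegree_lt (by omega)
        · rfl
      have hw : w = homogeneousComponent b w := by
        conv_lhs => rw [← w.sum_homogeneousComponent]
        refine Finset.sum_eq_single b (fun i _ hib => hzero i hib) (fun hb => ?_)
        simp only [Finset.mem_range, not_lt] at hb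
        exact homogeneousComponent_eq_zero b w (by omega)
      rw [hw]
      exact homogeneousComponent_isHomogeneous b w
    rcases Nat.eq_zero_or_pos P.natDegree with hPd | hPd
    · exact homog_case u v huv.symm hu ⟨a, hconst u P a hP hPd⟩
    rcases Nat.eq_zero_or_pos Q.natDegree with hQd | hQd
    · exact homog_case v u (by rw [mul_comm, ← huv]) hv ⟨c, hconst v Q c hQ hQd⟩
    have hA_eq : P.coeff 0 * Q.coeff 0 = A := by
      have h2 : (P * Q).coeff 0 = A := by
        rw [hPQ, Polynomial.coeff_add, Polynomial.coeff_C, if_pos rfl, Polynomial.coeff_C_mul,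
          Polynomial.coeff_X_pow, if_neg (by omega : ¬ (0 : ℕ) = s), mul_zero, add_zero]
      rwa [Polynomial.mul_coeff_zero] at h2
    have hB_eq : P.coeff P.natDegree * Q.coeff Q.natDegree = B := by
      have h2 : (P * Q).coeff s = B := by
        rw [hPQ, Polynomial.coeff_add, Polynomial.coeff_C, if_neg (by omega : ¬ s = 0),
          Polynomial.coeff_C_mul, Polynomial.coeff_X_pow, if_pos rfl, mul_one, zero_add]
      rw [← hnd, Polynomial.coeff_mul_degree_add_degree, Polynomial.leadingCoeff,
        Polynomial.leadingCoeff] at h2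
      exact h2
    rcases hsq with ⟨hsqA, hr1⟩ | hsqB
    · have hcop0 : IsRelPrime (P.coeff 0) (Q.coeff 0) := by
        intro z hz1 hz2
        exact hsqA z (by rw [← hA_eq]; exact mul_dvd_mul hz1 hz2)
      have hAB : A ∣ B := core hPQ hnd hPd hQd hcop0
      exact not_isUnit_of_isHomogeneous hA hr1 hA0 (hcop dvd_rfl hAB)
    · -- reverse the polynomials to use the same core lemma
      have hPtd : P.natTrailingDegree = 0 := by
        rw [Polynomial.natTrailingDegree_eq_zero]; right; exact hP0
      have hQtd : Q.natTrailingDegree = 0 := by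
        rw [Polynomial.natTrailingDegree_eq_zero]; right; exact hQ0
      have hrev : P.reverse * Q.reverse = Polynomial.C B + Polynomial.C A * Polynomial.X ^ s := by
        rw [← Polynomial.reverse_mul_of_domain, hPQ]
        rw [Polynomial.reverse, hRnd]
        rw [Polynomial.reflect_add, Polynomial.reflect_C_mul_X_pow]
        rw [Polynomial.reflect_C _ s]
        rw [Polynomial.revAt_le (le_refl s), Nat.sub_self, pow_zero, mul_one]
        ring
      have hndP' : P.reverse.natDegree = P.natDegree := by
        rw [Polynomial.reverse_natDegree, hPtd, Nat.sub_zero]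
      have hndQ' : Q.reverse.natDegree = Q.natDegree := by
        rw [Polynomial.reverse_natDegree, hQtd, Nat.sub_zero]
      have hcop0 : IsRelPrime (P.reverse.coeff 0) (Q.reverse.coeff 0) := by
        intro z hz1 hz2
        rw [Polynomial.coeff_zero_reverse] at hz1 hz2
        refine hsqB z ?_
        rw [← hB_eq]
        exact mul_dvd_mul hz1 hz2
      have hBA : B ∣ A :=
        core hrev (by rw [hndP', hndQ']; exact hnd) (by omega) (by omega) hcop0
      exact not_isUnit_of_isHomogeneous hB hd1 hB0 (hcop hBA dvd_rfl)

end Stmt15Aux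

theorem stmt_15 (m : ℕ) (hm : 1 ≤ m) (r d : ℕ) (hrd : r < d)
    (Φr Φd : MvPolynomial (Fin 3) (GaloisField 2 m))
    (hΦr : Φr.IsHomogeneous r) (hΦd : Φd.IsHomogeneous d)
    (hr0 : Φr ≠ 0) (hd0 : Φd ≠ 0)
    (hcop : IsRelPrime
      (MvPolynomial.map (algebraMap (GaloisField 2 m) (AlgebraicClosure (GaloisField 2 m))) Φr)
      (MvPolynomial.map (algebraMap (GaloisField 2 m) (AlgebraicClosure (GaloisField 2 m))) Φd))
    (hsq : (Squarefree (MvPolynomial.map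
          (algebraMap (GaloisField 2 m) (AlgebraicClosure (GaloisField 2 m))) Φr) ∧ 1 ≤ r) ∨
      Squarefree (MvPolynomial.map
          (algebraMap (GaloisField 2 m) (AlgebraicClosure (GaloisField 2 m))) Φd)) :
    Irreducible (MvPolynomial.map
      (algebraMap (GaloisField 2 m) (AlgebraicClosure (GaloisField 2 m))) (Φr + Φd)) := by
  set f := algebraMap (GaloisField 2 m) (AlgebraicClosure (GaloisField 2 m)) with hf
  have hinj : Function.Injective f := f.injective
  rw [map_add]
  exact Stmt15Aux.main hrd (hΦr.map f) (hΦd.map f)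
    (fun h => hr0 (MvPolynomial.map_injective f hinj (by simpa using h)))
    (fun h => hd0 (MvPolynomial.map_injective f hinj (by simpa using h)))
    hcop hsq
end
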